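/- arXiv:1905.01893 — 11 statements merged into one kernel-verified Lean document; each statement's English description precedes it below -/
import Mathlib

section
/- Let φ : ℝ² → ℝ be an NCP-function. Then exactly one of the following four alternatives holds: (NCP1) φ(a,b) > 0 for all (a,b) ∈ A ∪ B; (NCP2) φ(a,b) < 0 for all (a,b) ∈ A ∪ B; (NCP3) φ(a,b) < 0 for all (a,b) ∈ A and φ(a,b) > 0 for all (a,b) ∈ B; (NCP4) φ(a,b) > 0 for all (a,b) ∈ A and φ(a,b) < 0 for all (a,b) ∈ B. -/
/-! A continuous function has constant sign on every connected set on which it does not vanish.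
An NCP-function vanishes only on the boundary of the nonnegative quadrant, so it does not vanish on
the open quadrant `A` nor on its exterior `B`, both of which are connected. Hence `φ` has one sign on
`A` and one sign on `B`, and the four alternatives are the four combinations of these signs; they are
told apart by the values at `(1, 1) ∈ A` and `(-1, -1) ∈ B`. -/

/-- Property NCP1: `φ` is positive on `A ∪ B`. -/
def NCP1 (φ : ℝ × ℝ → ℝ) : Prop :=
  ∀ a b : ℝ, (0 < a ∧ 0 < b) ∨ (a < 0 ∨ b < 0) → 0 < φ (a, b)

/-- Property NCP2: `φ` is negative on `A ∪ B`. -/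
def NCP2 (φ : ℝ × ℝ → ℝ) : Prop :=
  ∀ a b : ℝ, (0 < a ∧ 0 < b) ∨ (a < 0 ∨ b < 0) → φ (a, b) < 0

/-- Property NCP3: `φ` is negative on `A` and positive on `B`. -/
def NCP3 (φ : ℝ × ℝ → ℝ) : Prop :=
  (∀ a b : ℝ, 0 < a → 0 < b → φ (a, b) < 0) ∧ (∀ a b : ℝ, a < 0 ∨ b < 0 → 0 < φ (a, b))

/-- Property NCP4: `φ` is positive on `A` and negative on `B`. -/
def NCP4 (φ : ℝ × ℝ → ℝ) : Prop :=
  (∀ a b : ℝ, 0 < a → 0 < b → 0 < φ (a, b)) ∧ (∀ a b : ℝ, a < 0 ∨ b < 0 → φ (a, b) < 0)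

open Set

theorem IsPreconnected.forall_lt_or_forall_gt_of_forall_ne {α β : Type*} [TopologicalSpace α]
    [LinearOrder β] [TopologicalSpace β] [OrderClosedTopology β] {s : Set α}
    (hs : IsPreconnected s) {f : α → β} (hf : ContinuousOn f s) {c : β}
    (hc : ∀ x ∈ s, f x ≠ c) : (∀ x ∈ s, c < f x) ∨ (∀ x ∈ s, f x < c) := by
  by_contra! h
  obtain ⟨⟨x, hx, hfx⟩, ⟨y, hy, hfy⟩⟩ := h
  obtain ⟨z, hz, hfz⟩ := hs.intermediate_value hx hy hf ⟨hfx, hfy⟩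
  exact hc z hz hfz

theorem isPreconnected_setOf_fst_neg_or_snd_neg :
    IsPreconnected {p : ℝ × ℝ | p.1 < 0 ∨ p.2 < 0} := by
  have hunion : {p : ℝ × ℝ | p.1 < 0 ∨ p.2 < 0} = Iio 0 ×ˢ univ ∪ univ ×ˢ Iio 0 := by
    ext p
    simp
  rw [hunion]
  exact (isPreconnected_Iio.prod isPreconnected_univ).union ((-1, -1) : ℝ × ℝ)
    (by simp) (by simp) (isPreconnected_univ.prod isPreconnected_Iio)

section NCPFunction

variable {φ : ℝ × ℝ → ℝ}

theorem ncp_sign_on_pos_quadrant (hcont : Continuous φ)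
    (hncp : ∀ a b : ℝ, φ (a, b) = 0 → a * b = 0) :
    (∀ a b : ℝ, 0 < a → 0 < b → 0 < φ (a, b)) ∨ (∀ a b : ℝ, 0 < a → 0 < b → φ (a, b) < 0) := by
  have hne : ∀ p ∈ Ioi (0 : ℝ) ×ˢ Ioi 0, φ p ≠ 0 := by
    rintro ⟨a, b⟩ ⟨ha, hb⟩ h0
    exact (mul_pos ha hb).ne' (hncp a b h0)
  simpa [Prod.forall, and_imp] using
    (isPreconnected_Ioi.prod isPreconnected_Ioi).forall_lt_or_forall_gt_of_forall_ne
      hcont.continuousOn hne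

theorem ncp_sign_off_nonneg_quadrant (hcont : Continuous φ)
    (hncp : ∀ a b : ℝ, φ (a, b) = 0 → 0 ≤ a ∧ 0 ≤ b) :
    (∀ a b : ℝ, a < 0 ∨ b < 0 → 0 < φ (a, b)) ∨ (∀ a b : ℝ, a < 0 ∨ b < 0 → φ (a, b) < 0) := by
  have hne : ∀ p ∈ {p : ℝ × ℝ | p.1 < 0 ∨ p.2 < 0}, φ p ≠ 0 := by
    rintro ⟨a, b⟩ hab h0
    obtain ⟨ha, hb⟩ := hncp a b h0
    rcases hab with hab | hab <;> exact hab.not_ge ‹_›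
  simpa [Prod.forall] using
    isPreconnected_setOf_fst_neg_or_snd_neg.forall_lt_or_forall_gt_of_forall_ne
      hcont.continuousOn hne

end NCPFunction

/-- Every NCP-function has precisely one of the properties NCP1, NCP2, NCP3, NCP4. -/
theorem ncp_four_alternatives (φ : ℝ × ℝ → ℝ) (hcont : Continuous φ)
    (hncp : ∀ a b : ℝ, φ (a, b) = 0 ↔ 0 ≤ a ∧ 0 ≤ b ∧ a * b = 0) :
    (NCP1 φ ∨ NCP2 φ ∨ NCP3 φ ∨ NCP4 φ) ∧
    ¬(NCP1 φ ∧ NCP2 φ) ∧ ¬(NCP1 φ ∧ NCP3 φ) ∧ ¬(NCP1 φ ∧ NCP4 φ) ∧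
    ¬(NCP2 φ ∧ NCP3 φ) ∧ ¬(NCP2 φ ∧ NCP4 φ) ∧ ¬(NCP3 φ ∧ NCP4 φ) := by
  unfold NCP1 NCP2 NCP3 NCP4
  have hA : (0 : ℝ) < 1 ∧ (0 : ℝ) < 1 := ⟨one_pos, one_pos⟩
  have hB : (-1 : ℝ) < 0 ∨ (-1 : ℝ) < 0 := .inl neg_one_lt_zero
  refine ⟨?_, fun ⟨h, h'⟩ => (h 1 1 (.inl hA)).not_gt (h' 1 1 (.inl hA)),
    fun ⟨h, h'⟩ => (h 1 1 (.inl hA)).not_gt (h'.1 1 1 hA.1 hA.2),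
    fun ⟨h, h'⟩ => (h (-1) (-1) (.inr hB)).not_gt (h'.2 (-1) (-1) hB),
    fun ⟨h, h'⟩ => (h (-1) (-1) (.inr hB)).not_gt (h'.2 (-1) (-1) hB),
    fun ⟨h, h'⟩ => (h 1 1 (.inl hA)).not_gt (h'.1 1 1 hA.1 hA.2),
    fun ⟨h, h'⟩ => (h.1 1 1 hA.1 hA.2).not_gt (h'.1 1 1 hA.1 hA.2)⟩
  rcases ncp_sign_on_pos_quadrant hcont fun a b h => ((hncp a b).1 h).2.2 with hposA | hnegA <;>
    rcases ncp_sign_off_nonneg_quadrant hcont fun a b h => ((hncp a b).1 h).imp_right And.left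
      with hposB | hnegB
  · exact .inl fun a b h => h.elim (fun h => hposA a b h.1 h.2) (hposB a b)
  · exact .inr <| .inr <| .inr ⟨hposA, hnegB⟩
  · exact .inr <| .inr <| .inl ⟨hnegA, hposB⟩
  · exact .inr <| .inl fun a b h => h.elim (fun h => hnegA a b h.1 h.2) (hnegB a b)
end

section
/- The Kanzow–Schwartz function φ_KS : ℝ² → ℝ is an or-compatible NCP-function: it is continuous, φ_KS(a,b) = 0 ⟺ (a ≥ 0 ∧ b ≥ 0 ∧ ab = 0), φ_KS(a,b) > 0 for all (a,b) ∈ A, and φ_KS(a,b) < 0 for all (a,b) ∈ B. -/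
noncomputable section

/-- The Kanzow–Schwartz function. -/
def phiKS (v : ℝ × ℝ) : ℝ :=
  if 0 ≤ v.1 + v.2 then v.1 * v.2 else -(v.1 ^ 2 + v.2 ^ 2) / 2

theorem phiKS_of_nonneg {a b : ℝ} (h : 0 ≤ a + b) : phiKS (a, b) = a * b := if_pos h

theorem phiKS_of_neg {a b : ℝ} (h : a + b < 0) : phiKS (a, b) = -(a ^ 2 + b ^ 2) / 2 :=
  if_neg h.not_ge

theorem continuous_phiKS : Continuous phiKS := by
  -- the two branches agree on the switching line `b = -a`, where both equal `-a ^ 2`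
  refine Continuous.if_le (continuous_fst.mul continuous_snd) (by fun_prop) continuous_const
    (continuous_fst.add continuous_snd) fun v hv => ?_
  have hb : v.2 = -v.1 := by linarith [hv]
  simp only [hb]
  ring

theorem phiKS_pos {a b : ℝ} (ha : 0 < a) (hb : 0 < b) : 0 < phiKS (a, b) := by
  rw [phiKS_of_nonneg (by positivity)]
  positivity

theorem phiKS_neg {a b : ℝ} (h : a < 0 ∨ b < 0) : phiKS (a, b) < 0 := by
  rcases le_or_gt 0 (a + b) with hab | hab
  · rw [phiKS_of_nonneg hab]
    rcases h with ha | hb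
    · exact mul_neg_of_neg_of_pos ha (by linarith)
    · exact mul_neg_of_pos_of_neg (by linarith) hb
  · rw [phiKS_of_neg hab]
    have : 0 < a ^ 2 + b ^ 2 := by
      rcases h with ha | hb
      · exact add_pos_of_pos_of_nonneg (sq_pos_of_neg ha) (sq_nonneg b)
      · exact add_pos_of_nonneg_of_pos (sq_nonneg a) (sq_pos_of_neg hb)
    linarith

theorem phiKS_eq_zero_iff {a b : ℝ} : phiKS (a, b) = 0 ↔ 0 ≤ a ∧ 0 ≤ b ∧ a * b = 0 := by
  constructor
  · intro h
    -- a zero cannot lie where `phiKS_neg` already fixes the sign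
    have ha : 0 ≤ a := le_of_not_gt fun ha => (phiKS_neg (.inl ha)).ne h
    have hb : 0 ≤ b := le_of_not_gt fun hb => (phiKS_neg (.inr hb)).ne h
    exact ⟨ha, hb, phiKS_of_nonneg (add_nonneg ha hb) ▸ h⟩
  · rintro ⟨ha, hb, hab⟩
    rw [phiKS_of_nonneg (add_nonneg ha hb), hab]

/-- The Kanzow–Schwartz function is an or-compatible NCP-function. -/
theorem phiKS_orCompatible_NCP :
    Continuous phiKS ∧
    (∀ a b : ℝ, phiKS (a, b) = 0 ↔ 0 ≤ a ∧ 0 ≤ b ∧ a * b = 0) ∧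
    (∀ a b : ℝ, 0 < a → 0 < b → 0 < phiKS (a, b)) ∧
    (∀ a b : ℝ, a < 0 ∨ b < 0 → phiKS (a, b) < 0) :=
  ⟨continuous_phiKS, fun _ _ => phiKS_eq_zero_iff, fun _ _ => phiKS_pos, fun _ _ => phiKS_neg⟩
end
end

section
/- A feasible point x̄ ∈ X of (MPOC) is S-stationary for (MPOC) if and only if there exist multipliers λ_i ≥ 0 (i ∈ I^g(x̄)), ρ_j ∈ ℝ (j ∈ P) and ξ_l ≥ 0 (l ∈ 𝓘(x̄) = I^{0+}(x̄) ∪ I^{+0}(x̄) ∪ I^{00}(x̄)) with 0 = ∇f(x̄) + Σ_{i ∈ I^g(x̄)} λ_i ∇g_i(x̄) + Σ_{j ∈ P} ρ_j ∇h_j(x̄) + Σ_{l ∈ 𝓘(x̄)} ξ_l (H_l(x̄) ∇G_l(x̄) + G_l(x̄) ∇H_l(x̄)), i.e., if and only if x̄ is a KKT point of the smooth reformulation MPOC(φ_KS) in which each or-constraint is replaced by φ_KS(G_l(x), H_l(x)) ≤ 0. -/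
noncomputable section

open Filter Topology

/-- The Fischer–Burmeister NCP-function. -/
def phiFB (v : ℝ × ℝ) : ℝ := v.1 + v.2 - Real.sqrt (v.1 ^ 2 + v.2 ^ 2)

/-- The smoothed Fischer–Burmeister function. -/
def phiFBt (t : ℝ) (v : ℝ × ℝ) : ℝ :=
  v.1 + v.2 - Real.sqrt (v.1 ^ 2 + v.2 ^ 2 + 2 * t)

/-- The offset Kanzow–Schwartz function. -/
def phiKSt (t : ℝ) (v : ℝ × ℝ) : ℝ := phiKS v - t

variable {n m p q : ℕ}

/-- The feasible set `X` of (MPOC). -/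
def feasMPOC (g : Fin m → (Fin n → ℝ) → ℝ) (h : Fin p → (Fin n → ℝ) → ℝ)
    (G H : Fin q → (Fin n → ℝ) → ℝ) : Set (Fin n → ℝ) :=
  {x | (∀ i, g i x ≤ 0) ∧ (∀ j, h j x = 0) ∧ ∀ l, G l x ≤ 0 ∨ H l x ≤ 0}

/-- The feasible set `X(φ^t)` of the relaxed problem P(φ^t). -/
def relFeas (g : Fin m → (Fin n → ℝ) → ℝ) (h : Fin p → (Fin n → ℝ) → ℝ)
    (G H : Fin q → (Fin n → ℝ) → ℝ) (phit : ℝ → ℝ × ℝ → ℝ) (t : ℝ) :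
    Set (Fin n → ℝ) :=
  {x | (∀ i, g i x ≤ 0) ∧ (∀ j, h j x = 0) ∧ ∀ l, phit t (G l x, H l x) ≤ 0}

/-- The feasible set of the complementarity-constrained surrogate (CC-MPOC). -/
def feasCC (g : Fin m → (Fin n → ℝ) → ℝ) (h : Fin p → (Fin n → ℝ) → ℝ)
    (G H : Fin q → (Fin n → ℝ) → ℝ) :
    Set ((Fin n → ℝ) × (Fin q → ℝ) × (Fin q → ℝ)) :=
  {w | (∀ i, g i w.1 ≤ 0) ∧ (∀ j, h j w.1 = 0) ∧ (∀ l, G l w.1 - w.2.1 l ≤ 0) ∧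
       (∀ l, H l w.1 - w.2.2 l ≤ 0) ∧ (∀ l, 0 ≤ w.2.1 l) ∧ (∀ l, 0 ≤ w.2.2 l) ∧
       ∀ l, w.2.1 l * w.2.2 l = 0}

/-- W-stationarity for (MPOC): multipliers are supported on the respective active sets
(`I^g(x)` for `lam`, `I^{0+}(x) ∪ I^{00}(x)` for `mu`, `I^{+0}(x) ∪ I^{00}(x)` for `nu`). -/
def WStat (f : (Fin n → ℝ) → ℝ) (g : Fin m → (Fin n → ℝ) → ℝ)
    (h : Fin p → (Fin n → ℝ) → ℝ) (G H : Fin q → (Fin n → ℝ) → ℝ)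
    (x : Fin n → ℝ) : Prop :=
  ∃ (lam : Fin m → ℝ) (rho : Fin p → ℝ) (mu nu : Fin q → ℝ),
    (∀ i, 0 ≤ lam i) ∧ (∀ i, g i x ≠ 0 → lam i = 0) ∧
    (∀ l, 0 ≤ mu l) ∧ (∀ l, ¬(G l x = 0 ∧ 0 ≤ H l x) → mu l = 0) ∧
    (∀ l, 0 ≤ nu l) ∧ (∀ l, ¬(H l x = 0 ∧ 0 ≤ G l x) → nu l = 0) ∧
    fderiv ℝ f x + (∑ i, lam i • fderiv ℝ (g i) x) + (∑ j, rho j • fderiv ℝ (h j) x)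
      + (∑ l, mu l • fderiv ℝ (G l) x) + (∑ l, nu l • fderiv ℝ (H l) x) = 0

/-- M-stationarity for (MPOC). -/
def MStat (f : (Fin n → ℝ) → ℝ) (g : Fin m → (Fin n → ℝ) → ℝ)
    (h : Fin p → (Fin n → ℝ) → ℝ) (G H : Fin q → (Fin n → ℝ) → ℝ)
    (x : Fin n → ℝ) : Prop :=
  ∃ (lam : Fin m → ℝ) (rho : Fin p → ℝ) (mu nu : Fin q → ℝ),
    (∀ i, 0 ≤ lam i) ∧ (∀ i, g i x ≠ 0 → lam i = 0) ∧
    (∀ l, 0 ≤ mu l) ∧ (∀ l, ¬(G l x = 0 ∧ 0 ≤ H l x) → mu l = 0) ∧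
    (∀ l, 0 ≤ nu l) ∧ (∀ l, ¬(H l x = 0 ∧ 0 ≤ G l x) → nu l = 0) ∧
    (∀ l, G l x = 0 → H l x = 0 → mu l * nu l = 0) ∧
    fderiv ℝ f x + (∑ i, lam i • fderiv ℝ (g i) x) + (∑ j, rho j • fderiv ℝ (h j) x)
      + (∑ l, mu l • fderiv ℝ (G l) x) + (∑ l, nu l • fderiv ℝ (H l) x) = 0

/-- S-stationarity for (MPOC). -/
def SStat (f : (Fin n → ℝ) → ℝ) (g : Fin m → (Fin n → ℝ) → ℝ)
    (h : Fin p → (Fin n → ℝ) → ℝ) (G H : Fin q → (Fin n → ℝ) → ℝ)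
    (x : Fin n → ℝ) : Prop :=
  ∃ (lam : Fin m → ℝ) (rho : Fin p → ℝ) (mu nu : Fin q → ℝ),
    (∀ i, 0 ≤ lam i) ∧ (∀ i, g i x ≠ 0 → lam i = 0) ∧
    (∀ l, 0 ≤ mu l) ∧ (∀ l, ¬(G l x = 0 ∧ 0 ≤ H l x) → mu l = 0) ∧
    (∀ l, 0 ≤ nu l) ∧ (∀ l, ¬(H l x = 0 ∧ 0 ≤ G l x) → nu l = 0) ∧
    (∀ l, G l x = 0 → H l x = 0 → mu l = 0 ∧ nu l = 0) ∧
    fderiv ℝ f x + (∑ i, lam i • fderiv ℝ (g i) x) + (∑ j, rho j • fderiv ℝ (h j) x)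
      + (∑ l, mu l • fderiv ℝ (G l) x) + (∑ l, nu l • fderiv ℝ (H l) x) = 0

/-- MPOC-MFCQ at `x`: positive-linear independence of the active gradients. -/
def MPOC_MFCQ (g : Fin m → (Fin n → ℝ) → ℝ) (h : Fin p → (Fin n → ℝ) → ℝ)
    (G H : Fin q → (Fin n → ℝ) → ℝ) (x : Fin n → ℝ) : Prop :=
  ∀ (lam : Fin m → ℝ) (rho : Fin p → ℝ) (mu nu : Fin q → ℝ),
    (∀ i, 0 ≤ lam i) → (∀ i, g i x ≠ 0 → lam i = 0) →
    (∀ l, 0 ≤ mu l) → (∀ l, ¬(G l x = 0 ∧ 0 ≤ H l x) → mu l = 0) →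
    (∀ l, 0 ≤ nu l) → (∀ l, ¬(H l x = 0 ∧ 0 ≤ G l x) → nu l = 0) →
    ((∑ i, lam i • fderiv ℝ (g i) x) + (∑ j, rho j • fderiv ℝ (h j) x)
      + (∑ l, mu l • fderiv ℝ (G l) x) + (∑ l, nu l • fderiv ℝ (H l) x) = 0) →
    (∀ i, lam i = 0) ∧ (∀ j, rho j = 0) ∧ (∀ l, mu l = 0) ∧ (∀ l, nu l = 0)

/-- MPOC-LICQ at `x`: linear independence of the active gradients. -/
def MPOC_LICQ (g : Fin m → (Fin n → ℝ) → ℝ) (h : Fin p → (Fin n → ℝ) → ℝ)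
    (G H : Fin q → (Fin n → ℝ) → ℝ) (x : Fin n → ℝ) : Prop :=
  ∀ (lam : Fin m → ℝ) (rho : Fin p → ℝ) (mu nu : Fin q → ℝ),
    (∀ i, g i x ≠ 0 → lam i = 0) →
    (∀ l, ¬(G l x = 0 ∧ 0 ≤ H l x) → mu l = 0) →
    (∀ l, ¬(H l x = 0 ∧ 0 ≤ G l x) → nu l = 0) →
    ((∑ i, lam i • fderiv ℝ (g i) x) + (∑ j, rho j • fderiv ℝ (h j) x)
      + (∑ l, mu l • fderiv ℝ (G l) x) + (∑ l, nu l • fderiv ℝ (H l) x) = 0) →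
    (∀ i, lam i = 0) ∧ (∀ j, rho j = 0) ∧ (∀ l, mu l = 0) ∧ (∀ l, nu l = 0)

/-- Generic first-order (KKT-type) system for the NCP-reformulation of (MPOC): multipliers
`xi l ≥ 0` supported on the active set `𝓘(x)`, with subgradient coefficients
`(alpha l, beta l)` equal to `(1,0)` on `I^{0+}(x)`, `(0,1)` on `I^{+0}(x)`, and satisfying
`extraI00` on the biactive set `I^{00}(x)`. -/
def KKTGen (f : (Fin n → ℝ) → ℝ) (g : Fin m → (Fin n → ℝ) → ℝ)
    (h : Fin p → (Fin n → ℝ) → ℝ) (G H : Fin q → (Fin n → ℝ) → ℝ)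
    (x : Fin n → ℝ) (extraI00 : ℝ → ℝ → Prop) : Prop :=
  ∃ (lam : Fin m → ℝ) (rho : Fin p → ℝ) (xi alpha beta : Fin q → ℝ),
    (∀ i, 0 ≤ lam i) ∧ (∀ i, g i x ≠ 0 → lam i = 0) ∧
    (∀ l, 0 ≤ xi l) ∧
    (∀ l, ¬((G l x = 0 ∧ 0 ≤ H l x) ∨ (H l x = 0 ∧ 0 ≤ G l x)) → xi l = 0) ∧
    (∀ l, G l x = 0 → 0 < H l x → alpha l = 1 ∧ beta l = 0) ∧
    (∀ l, 0 < G l x → H l x = 0 → alpha l = 0 ∧ beta l = 1) ∧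
    (∀ l, G l x = 0 → H l x = 0 → extraI00 (alpha l) (beta l)) ∧
    fderiv ℝ f x + (∑ i, lam i • fderiv ℝ (g i) x) + (∑ j, rho j • fderiv ℝ (h j) x)
      + (∑ l, xi l • (alpha l • fderiv ℝ (G l) x + beta l • fderiv ℝ (H l) x)) = 0

/-- Stationarity (of W-type, refined by `extra` on the biactive set `I^{GH}`) for the
switching-constrained surrogate (SC-MPOC), after elimination of the multipliers of the
sign constraints on the slack variables. -/
def StatSC (f : (Fin n → ℝ) → ℝ) (g : Fin m → (Fin n → ℝ) → ℝ)
    (h : Fin p → (Fin n → ℝ) → ℝ) (G H : Fin q → (Fin n → ℝ) → ℝ)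
    (x : Fin n → ℝ) (y z : Fin q → ℝ) (extra : ℝ → ℝ → Prop) : Prop :=
  ∃ (lam : Fin m → ℝ) (rho : Fin p → ℝ) (muT nuT : Fin q → ℝ),
    (∀ i, 0 ≤ lam i) ∧ (∀ i, g i x ≠ 0 → lam i = 0) ∧
    (∀ l, 0 ≤ muT l) ∧ (∀ l, G l x ≠ y l → muT l = 0) ∧ (∀ l, muT l * y l = 0) ∧
    (∀ l, 0 ≤ nuT l) ∧ (∀ l, H l x ≠ z l → nuT l = 0) ∧ (∀ l, nuT l * z l = 0) ∧
    (∀ l, G l x = y l → H l x = z l → extra (muT l) (nuT l)) ∧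
    fderiv ℝ f x + (∑ i, lam i • fderiv ℝ (g i) x) + (∑ j, rho j • fderiv ℝ (h j) x)
      + (∑ l, muT l • fderiv ℝ (G l) x) + (∑ l, nuT l • fderiv ℝ (H l) x) = 0

/-- Stationarity (of W-type, refined by `extra` on the biactive set `I^{00}_CC`) for the
complementarity-constrained surrogate (CC-MPOC). -/
def StatCC (f : (Fin n → ℝ) → ℝ) (g : Fin m → (Fin n → ℝ) → ℝ)
    (h : Fin p → (Fin n → ℝ) → ℝ) (G H : Fin q → (Fin n → ℝ) → ℝ)
    (x : Fin n → ℝ) (y z : Fin q → ℝ) (extra : ℝ → ℝ → Prop) : Prop :=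
  ∃ (lam : Fin m → ℝ) (rho : Fin p → ℝ) (eta theta mubar nubar : Fin q → ℝ),
    (∀ i, 0 ≤ lam i) ∧ (∀ i, g i x ≠ 0 → lam i = 0) ∧
    (∀ l, 0 ≤ eta l) ∧ (∀ l, eta l * (G l x - y l) = 0) ∧
    (∀ l, 0 ≤ theta l) ∧ (∀ l, theta l * (H l x - z l) = 0) ∧
    (fderiv ℝ f x + (∑ i, lam i • fderiv ℝ (g i) x) + (∑ j, rho j • fderiv ℝ (h j) x)
      + (∑ l, eta l • fderiv ℝ (G l) x) + (∑ l, theta l • fderiv ℝ (H l) x) = 0) ∧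
    (∀ l, y l = 0 → eta l + mubar l = 0) ∧
    (∀ l, 0 < y l → z l = 0 → eta l = 0) ∧
    (∀ l, z l = 0 → theta l + nubar l = 0) ∧
    (∀ l, y l = 0 → 0 < z l → theta l = 0) ∧
    (∀ l, y l = 0 → z l = 0 → extra (mubar l) (nubar l))

/-- A feasible point of (MPOC) is S-stationary iff it is a KKT point of the smooth
reformulation MPOC(φ_KS). -/
theorem sstationary_iff_kkt_phiKS {n m p q : ℕ} (f : (Fin n → ℝ) → ℝ)
    (g : Fin m → (Fin n → ℝ) → ℝ) (h : Fin p → (Fin n → ℝ) → ℝ)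
    (G H : Fin q → (Fin n → ℝ) → ℝ)
    (hf : ContDiff ℝ 1 f) (hg : ∀ i, ContDiff ℝ 1 (g i)) (hh : ∀ j, ContDiff ℝ 1 (h j))
    (hG : ∀ l, ContDiff ℝ 1 (G l)) (hH : ∀ l, ContDiff ℝ 1 (H l))
    (xb : Fin n → ℝ) (hxb : xb ∈ feasMPOC g h G H) :
    SStat f g h G H xb ↔
      ∃ (lam : Fin m → ℝ) (rho : Fin p → ℝ) (xi : Fin q → ℝ),
        (∀ i, 0 ≤ lam i) ∧ (∀ i, g i xb ≠ 0 → lam i = 0) ∧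
        (∀ l, 0 ≤ xi l) ∧
        (∀ l, ¬((G l xb = 0 ∧ 0 ≤ H l xb) ∨ (H l xb = 0 ∧ 0 ≤ G l xb)) → xi l = 0) ∧
        fderiv ℝ f xb + (∑ i, lam i • fderiv ℝ (g i) xb)
          + (∑ j, rho j • fderiv ℝ (h j) xb)
          + (∑ l, xi l • (H l xb • fderiv ℝ (G l) xb + G l xb • fderiv ℝ (H l) xb)) = 0 := by
  constructor
  · rintro ⟨lam, rho, mu, nu, hlam, hlam0, hmu, hmu0, hnu, hnu0, hbi, heq⟩
    refine ⟨lam, rho,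
      fun l => if h1 : G l xb = 0 ∧ 0 < H l xb then mu l / H l xb
        else if h2 : H l xb = 0 ∧ 0 < G l xb then nu l / G l xb else 0,
      hlam, hlam0, ?_, ?_, ?_⟩
    · intro l
      by_cases h1 : G l xb = 0 ∧ 0 < H l xb
      · simpa [h1] using div_nonneg (hmu l) h1.2.le
      · by_cases h2 : H l xb = 0 ∧ 0 < G l xb
        · simpa [h1, h2] using div_nonneg (hnu l) h2.2.le
        · simp [h1, h2]
    · intro l hl
      have h1 : ¬(G l xb = 0 ∧ 0 < H l xb) := fun h => hl (Or.inl ⟨h.1, h.2.le⟩)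
      have h2 : ¬(H l xb = 0 ∧ 0 < G l xb) := fun h => hl (Or.inr ⟨h.1, h.2.le⟩)
      simp [h1, h2]
    · have key : ∀ l : Fin q,
          (if h1 : G l xb = 0 ∧ 0 < H l xb then mu l / H l xb
            else if h2 : H l xb = 0 ∧ 0 < G l xb then nu l / G l xb else 0) •
            (H l xb • fderiv ℝ (G l) xb + G l xb • fderiv ℝ (H l) xb)
          = mu l • fderiv ℝ (G l) xb + nu l • fderiv ℝ (H l) xb := by
        intro l
        by_cases h1 : G l xb = 0 ∧ 0 < H l xb
        · have hnul : nu l = 0 := hnu0 l (fun h => by rw [h.1] at h1; exact h1.2.false)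
          simp [h1, hnul, h1.1, smul_smul, div_mul_cancel₀ _ h1.2.ne']
        · by_cases h2 : H l xb = 0 ∧ 0 < G l xb
          · have hmul : mu l = 0 := hmu0 l (fun h => by rw [h.1] at h2; exact h2.2.false)
            simp [h1, h2, hmul, h2.1, smul_smul, div_mul_cancel₀ _ h2.2.ne']
          · have hmul : mu l = 0 := by
              by_cases hG0 : G l xb = 0 ∧ 0 ≤ H l xb
              · have hH0 : H l xb = 0 :=
                  le_antisymm (not_lt.1 fun h => h1 ⟨hG0.1, h⟩) hG0.2
                exact (hbi l hG0.1 hH0).1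
              · exact hmu0 l hG0
            have hnul : nu l = 0 := by
              by_cases hH0 : H l xb = 0 ∧ 0 ≤ G l xb
              · have hG0 : G l xb = 0 :=
                  le_antisymm (not_lt.1 fun h => h2 ⟨hH0.1, h⟩) hH0.2
                exact (hbi l hG0 hH0.1).2
              · exact hnu0 l hH0
            simp [h1, h2, hmul, hnul]
      rw [Finset.sum_congr rfl (fun l _ => key l), Finset.sum_add_distrib, ← add_assoc]
      exact heq
  · rintro ⟨lam, rho, xi, hlam, hlam0, hxi, hxi0, heq⟩
    refine ⟨lam, rho, fun l => xi l * H l xb, fun l => xi l * G l xb,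
      hlam, hlam0, ?_, ?_, ?_, ?_, ?_, ?_⟩
    · intro l
      by_cases hz : xi l = 0
      · simp [hz]
      · have hact : (G l xb = 0 ∧ 0 ≤ H l xb) ∨ (H l xb = 0 ∧ 0 ≤ G l xb) := by
          by_contra hc; exact hz (hxi0 l hc)
        rcases hact with h | h
        · exact mul_nonneg (hxi l) h.2
        · simp [h.1]
    · intro l hl
      by_cases hz : xi l = 0
      · simp [hz]
      · have hact : (G l xb = 0 ∧ 0 ≤ H l xb) ∨ (H l xb = 0 ∧ 0 ≤ G l xb) := by
          by_contra hc; exact hz (hxi0 l hc)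
        rcases hact with h | h
        · exact absurd h hl
        · simp [h.1]
    · intro l
      by_cases hz : xi l = 0
      · simp [hz]
      · have hact : (G l xb = 0 ∧ 0 ≤ H l xb) ∨ (H l xb = 0 ∧ 0 ≤ G l xb) := by
          by_contra hc; exact hz (hxi0 l hc)
        rcases hact with h | h
        · simp [h.1]
        · exact mul_nonneg (hxi l) h.2
    · intro l hl
      by_cases hz : xi l = 0
      · simp [hz]
      · have hact : (G l xb = 0 ∧ 0 ≤ H l xb) ∨ (H l xb = 0 ∧ 0 ≤ G l xb) := by
          by_contra hc; exact hz (hxi0 l hc)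
        rcases hact with h | h
        · simp [h.1]
        · exact absurd h hl
    · intro l hG0 hH0
      simp [hG0, hH0]
    · have key : ∀ l : Fin q,
          (xi l * H l xb) • fderiv ℝ (G l) xb + (xi l * G l xb) • fderiv ℝ (H l) xb
          = xi l • (H l xb • fderiv ℝ (G l) xb + G l xb • fderiv ℝ (H l) xb) := by
        intro l
        rw [smul_add, smul_smul, smul_smul]
      calc fderiv ℝ f xb + (∑ i, lam i • fderiv ℝ (g i) xb)
            + (∑ j, rho j • fderiv ℝ (h j) xb)
            + (∑ l, (xi l * H l xb) • fderiv ℝ (G l) xb)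
            + (∑ l, (xi l * G l xb) • fderiv ℝ (H l) xb)
          = fderiv ℝ f xb + (∑ i, lam i • fderiv ℝ (g i) xb)
            + (∑ j, rho j • fderiv ℝ (h j) xb)
            + (∑ l, ((xi l * H l xb) • fderiv ℝ (G l) xb
                + (xi l * G l xb) • fderiv ℝ (H l) xb)) := by
            rw [Finset.sum_add_distrib, ← add_assoc]
        _ = 0 := by
            rw [Finset.sum_congr rfl (fun l _ => key l)]; exact heq
end
end

section
/- A feasible point x̄ ∈ X of (MPOC) is W-stationary for (MPOC) if and only if there exist multipliers λ_i ≥ 0 (i ∈ I^g(x̄)), ρ_j ∈ ℝ (j ∈ P), ξ_l ≥ 0 (l ∈ 𝓘(x̄) = I^{0+}(x̄) ∪ I^{+0}(x̄) ∪ I^{00}(x̄)) and coefficients (α_l, β_l) ∈ ℝ² (l ∈ 𝓘(x̄)) with (α_l, β_l) = (1,0) for l ∈ I^{0+}(x̄), (α_l, β_l) = (0,1) for l ∈ I^{+0}(x̄), and α_l ≥ 0, β_l ≥ 0, α_l + β_l = 1 for l ∈ I^{00}(x̄), such that 0 = ∇f(x̄) + Σ_{i ∈ I^g(x̄)} λ_i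 ∇g_i(x̄) + Σ_{j ∈ P} ρ_j ∇h_j(x̄) + Σ_{l ∈ 𝓘(x̄)} ξ_l (α_l ∇G_l(x̄) + β_l ∇H_l(x̄)). (This system is the KKT system of MPOC(φ_min) with respect to Clarke's subdifferential, since the Clarke subdifferential of φ_min at active points is {(1,0)} if a = 0, b > 0, {(0,1)} if a > 0, b = 0, and the segment conv{(1,0),(0,1)} if a = b = 0.) -/
noncomputable section

open Filter Topology

variable {n m p q : ℕ}

/-- W-stationarity of a feasible point of (MPOC) is equivalent to the KKT system of
MPOC(φ_min) w.r.t. Clarke's subdifferential. -/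
theorem wstationary_iff_kkt_phimin_clarke {n m p q : ℕ} (f : (Fin n → ℝ) → ℝ)
    (g : Fin m → (Fin n → ℝ) → ℝ) (h : Fin p → (Fin n → ℝ) → ℝ)
    (G H : Fin q → (Fin n → ℝ) → ℝ)
    (hf : ContDiff ℝ 1 f) (hg : ∀ i, ContDiff ℝ 1 (g i)) (hh : ∀ j, ContDiff ℝ 1 (h j))
    (hG : ∀ l, ContDiff ℝ 1 (G l)) (hH : ∀ l, ContDiff ℝ 1 (H l))
    (xb : Fin n → ℝ) (hxb : xb ∈ feasMPOC g h G H) :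
    WStat f g h G H xb ↔
      KKTGen f g h G H xb (fun a b => 0 ≤ a ∧ 0 ≤ b ∧ a + b = 1) := by
  classical
  constructor
  · rintro ⟨lam, rho, mu, nu, hlam, hlam0, hmu, hmu0, hnu, hnu0, heq⟩
    set al : Fin q → ℝ := fun l =>
      if 0 < G l xb ∧ H l xb = 0 then 0
      else if mu l + nu l = 0 then 1 else mu l / (mu l + nu l) with hal
    have key : ∀ l, (mu l + nu l) * al l = mu l ∧ (mu l + nu l) * (1 - al l) = nu l := by
      intro l
      by_cases hc : 0 < G l xb ∧ H l xb = 0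
      · have hmul : mu l = 0 := hmu0 l (by rintro ⟨h1, _⟩; exact absurd h1 (ne_of_gt hc.1))
        simp [hal, hc, hmul]
      · by_cases hs : mu l + nu l = 0
        · have h1 : mu l = 0 := le_antisymm (by linarith [hnu l]) (hmu l)
          have h2 : nu l = 0 := by linarith
          simp [hal, hc, hs, h1, h2]
        · have h1 : (mu l + nu l) * al l = mu l := by
            simp only [hal, hc, hs, if_false]; field_simp
          exact ⟨h1, by rw [mul_sub, mul_one, h1]; ring⟩
    refine ⟨lam, rho, fun l => mu l + nu l, al, fun l => 1 - al l,
      hlam, hlam0, fun l => add_nonneg (hmu l) (hnu l), ?_, ?_, ?_, ?_, ?_⟩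
    · intro l hc
      rw [not_or] at hc
      show mu l + nu l = 0
      rw [hmu0 l hc.1, hnu0 l hc.2, add_zero]
    · intro l hG hH
      have hc : ¬(0 < G l xb ∧ H l xb = 0) := by
        rintro ⟨h1, _⟩; exact absurd hG (ne_of_gt h1)
      have hnul : nu l = 0 := hnu0 l (by rintro ⟨h1, _⟩; exact absurd h1 (ne_of_gt hH))
      by_cases hs : mu l + nu l = 0
      · simp [hal, hc, hs]
      · have hmune : mu l ≠ 0 := by
          intro h; exact hs (by rw [h, hnul, add_zero])
        have : al l = 1 := by
          simp only [hal, hc, hs, if_false]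
          rw [hnul, add_zero, div_self hmune]
        exact ⟨this, by show (1:ℝ) - al l = 0; rw [this]; ring⟩
    · intro l hG hH
      simp [hal, hG, hH]
    · intro l hG hH
      have hc : ¬(0 < G l xb ∧ H l xb = 0) := by
        rintro ⟨h1, _⟩; exact absurd hG (ne_of_gt h1)
      by_cases hs : mu l + nu l = 0
      · simp [hal, hc, hs]
      · have hspos : 0 < mu l + nu l :=
          lt_of_le_of_ne (add_nonneg (hmu l) (hnu l)) (Ne.symm hs)
        have hle : mu l / (mu l + nu l) ≤ 1 := by
          rw [div_le_one hspos]; linarith [hnu l]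
        have hge : 0 ≤ mu l / (mu l + nu l) := div_nonneg (hmu l) hspos.le
        simp only [hal, hc, hs, if_false]
        refine ⟨hge, by linarith, by ring⟩
    · have hsum : (∑ l, (mu l + nu l) • (al l • fderiv ℝ (G l) xb
          + (1 - al l) • fderiv ℝ (H l) xb))
          = (∑ l, mu l • fderiv ℝ (G l) xb) + (∑ l, nu l • fderiv ℝ (H l) xb) := by
        rw [← Finset.sum_add_distrib]
        refine Finset.sum_congr rfl fun l _ => ?_
        rw [smul_add, smul_smul, smul_smul, (key l).1, (key l).2]
      beta_reduce
      rw [hsum, ← add_assoc]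
      exact heq
  · rintro ⟨lam, rho, xi, al, be, hlam, hlam0, hxi, hxi0, h10, h01, h00, heq⟩
    refine ⟨lam, rho, fun l => xi l * al l, fun l => xi l * be l, hlam, hlam0,
      ?_, ?_, ?_, ?_, ?_⟩
    · intro l
      by_cases hz : xi l = 0
      · simp [hz]
      · have hact : (G l xb = 0 ∧ 0 ≤ H l xb) ∨ (H l xb = 0 ∧ 0 ≤ G l xb) := by
          by_contra hc; exact hz (hxi0 l hc)
        have hal : 0 ≤ al l := by
          rcases hact with ⟨hG, hH⟩ | ⟨hH, hG⟩
          · rcases hH.lt_or_eq with hH' | hH'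
            · rw [(h10 l hG hH').1]; norm_num
            · exact (h00 l hG hH'.symm).1
          · rcases hG.lt_or_eq with hG' | hG'
            · rw [(h01 l hG' hH).1]
            · exact (h00 l hG'.symm hH).1
        exact mul_nonneg (hxi l) hal
    · intro l hc
      by_cases hz : xi l = 0
      · simp [hz]
      · have hact : (G l xb = 0 ∧ 0 ≤ H l xb) ∨ (H l xb = 0 ∧ 0 ≤ G l xb) := by
          by_contra hc'; exact hz (hxi0 l hc')
        rcases hact with h | ⟨hH, hG⟩
        · exact absurd h hc
        · have hGpos : 0 < G l xb := by
            rcases hG.lt_or_eq with h' | h'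
            · exact h'
            · exact absurd ⟨h'.symm, hH.ge⟩ hc
          show xi l * al l = 0
          rw [(h01 l hGpos hH).1, mul_zero]
    · intro l
      by_cases hz : xi l = 0
      · simp [hz]
      · have hact : (G l xb = 0 ∧ 0 ≤ H l xb) ∨ (H l xb = 0 ∧ 0 ≤ G l xb) := by
          by_contra hc; exact hz (hxi0 l hc)
        have hbe : 0 ≤ be l := by
          rcases hact with ⟨hG, hH⟩ | ⟨hH, hG⟩
          · rcases hH.lt_or_eq with hH' | hH'
            · rw [(h10 l hG hH').2]
            · exact (h00 l hG hH'.symm).2.1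
          · rcases hG.lt_or_eq with hG' | hG'
            · rw [(h01 l hG' hH).2]; norm_num
            · exact (h00 l hG'.symm hH).2.1
        exact mul_nonneg (hxi l) hbe
    · intro l hc
      by_cases hz : xi l = 0
      · simp [hz]
      · have hact : (G l xb = 0 ∧ 0 ≤ H l xb) ∨ (H l xb = 0 ∧ 0 ≤ G l xb) := by
          by_contra hc'; exact hz (hxi0 l hc')
        rcases hact with ⟨hG, hH⟩ | h
        · have hHpos : 0 < H l xb := by
            rcases hH.lt_or_eq with h' | h'
            · exact h'
            · exact absurd ⟨h'.symm, hG.ge⟩ hc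
          show xi l * be l = 0
          rw [(h10 l hG hHpos).2, mul_zero]
        · exact absurd h hc
    · have hsum : (∑ l, xi l • (al l • fderiv ℝ (G l) xb + be l • fderiv ℝ (H l) xb))
          = (∑ l, (xi l * al l) • fderiv ℝ (G l) xb)
            + (∑ l, (xi l * be l) • fderiv ℝ (H l) xb) := by
        rw [← Finset.sum_add_distrib]
        refine Finset.sum_congr rfl fun l _ => ?_
        rw [smul_add, smul_smul, smul_smul]
      beta_reduce
      rw [add_assoc, ← hsum]
      exact heq
end
end

section
/- A feasible point x̄ ∈ X of (MPOC) is M-stationary for (MPOC) if and only if there exist multipliers λ_i ≥ 0 (i ∈ I^g(x̄)), ρ_j ∈ ℝ (j ∈ P), ξ_l ≥ 0 (l ∈ 𝓘(x̄) = I^{0+}(x̄) ∪ I^{+0}(x̄) ∪ I^{00}(x̄)) and coefficients (α_l, β_l) ∈ ℝ² (l ∈ 𝓘(x̄)) with (α_l, β_l) = (1,0) for l ∈ I^{0+}(x̄), (α_l, β_l) = (0,1) for l ∈ I^{+0}(x̄), and (α_l, β_l) ∈ {(1,0), (0,1)} for l ∈ I^{00}(x̄), such that 0 = ∇f(x̄)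 + Σ_{i ∈ I^g(x̄)} λ_i ∇g_i(x̄) + Σ_{j ∈ P} ρ_j ∇h_j(x̄) + Σ_{l ∈ 𝓘(x̄)} ξ_l (α_l ∇G_l(x̄) + β_l ∇H_l(x̄)). (This system is the KKT system of MPOC(φ_min) with respect to Mordukhovich's subdifferential, since the Mordukhovich subdifferential of φ_min at active points is {(1,0)} if a = 0, b > 0, {(0,1)} if a > 0, b = 0, and the two-point set {(1,0),(0,1)} if a = b = 0.) -/
noncomputable section

open Filter Topology

variable {n m p q : ℕ}

/-- M-stationarity of a feasible point of (MPOC) is equivalent to the KKT system of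
MPOC(φ_min) w.r.t. Mordukhovich's subdifferential. -/
theorem mstationary_iff_kkt_phimin_mordukhovich {n m p q : ℕ} (f : (Fin n → ℝ) → ℝ)
    (g : Fin m → (Fin n → ℝ) → ℝ) (h : Fin p → (Fin n → ℝ) → ℝ)
    (G H : Fin q → (Fin n → ℝ) → ℝ)
    (hf : ContDiff ℝ 1 f) (hg : ∀ i, ContDiff ℝ 1 (g i)) (hh : ∀ j, ContDiff ℝ 1 (h j))
    (hG : ∀ l, ContDiff ℝ 1 (G l)) (hH : ∀ l, ContDiff ℝ 1 (H l))
    (xb : Fin n → ℝ) (hxb : xb ∈ feasMPOC g h G H) :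
    MStat f g h G H xb ↔
      KKTGen f g h G H xb (fun a b => (a = 1 ∧ b = 0) ∨ (a = 0 ∧ b = 1)) := by
  classical
  constructor
  · rintro ⟨lam, rho, mu, nu, hlam, hlamz, hmu, hmuz, hnu, hnuz, hcomp, heq⟩
    refine ⟨lam, rho,
      (fun l => if 0 < G l xb then nu l else if nu l = 0 then mu l else nu l),
      (fun l => if 0 < G l xb then 0 else if nu l = 0 then 1 else 0),
      (fun l => if 0 < G l xb then 1 else if nu l = 0 then 0 else 1),
      hlam, hlamz, ?_, ?_, ?_, ?_, ?_, ?_⟩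
    · intro l
      by_cases h1 : 0 < G l xb
      · simp [h1, hnu l]
      · by_cases h2 : nu l = 0 <;> simp [h1, h2, hmu l, hnu l]
    · intro l hl
      push_neg at hl
      have hmu0 : mu l = 0 :=
        hmuz l (by rintro ⟨h1, h2⟩; exact absurd (hl.1 h1) (not_lt.mpr h2))
      have hnu0 : nu l = 0 :=
        hnuz l (by rintro ⟨h1, h2⟩; exact absurd (hl.2 h1) (not_lt.mpr h2))
      simp [hmu0, hnu0]
    · intro l hG0 hH0
      have h1 : ¬ 0 < G l xb := by rw [hG0]; exact lt_irrefl 0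
      have hnu0 : nu l = 0 := hnuz l (by intro ⟨h2, _⟩; exact absurd h2 (ne_of_gt hH0))
      simp [h1, hnu0]
    · intro l hG0 hH0
      simp [hG0]
    · intro l hG0 hH0
      have h1 : ¬ 0 < G l xb := by rw [hG0]; exact lt_irrefl 0
      by_cases h2 : nu l = 0
      · left; simp [h1, h2]
      · right; simp [h1, h2]
    · have key : (∑ l, (if 0 < G l xb then nu l else if nu l = 0 then mu l else nu l) •
          ((if 0 < G l xb then (0:ℝ) else if nu l = 0 then 1 else 0) • fderiv ℝ (G l) xb
           + (if 0 < G l xb then (1:ℝ) else if nu l = 0 then 0 else 1) • fderiv ℝ (H l) xb))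
          = (∑ l, mu l • fderiv ℝ (G l) xb) + ∑ l, nu l • fderiv ℝ (H l) xb := by
        rw [← Finset.sum_add_distrib]
        refine Finset.sum_congr rfl fun l _ => ?_
        by_cases h1 : 0 < G l xb
        · have hmu0 : mu l = 0 := hmuz l (by intro ⟨h2, _⟩; exact absurd h2 (ne_of_gt h1))
          simp [h1, hmu0]
        · by_cases h2 : nu l = 0
          · simp [h1, h2]
          · have hact : H l xb = 0 ∧ 0 ≤ G l xb := by
              by_contra hc; exact h2 (hnuz l hc)
            have hG0 : G l xb = 0 := le_antisymm (not_lt.mp h1) hact.2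
            have hmu0 : mu l = 0 := by
              have := hcomp l hG0 hact.1
              rcases mul_eq_zero.mp this with h | h
              · exact h
              · exact absurd h h2
            simp [h1, h2, hmu0]
      rw [key, ← add_assoc]
      exact heq
  · rintro ⟨lam, rho, xi, alpha, beta, hlam, hlamz, hxi, hxiz, h0p, hp0, h00, heq⟩
    have hcase : ∀ l, xi l ≠ 0 →
        (alpha l = 1 ∧ beta l = 0) ∨ (alpha l = 0 ∧ beta l = 1) := by
      intro l hne
      have hact : (G l xb = 0 ∧ 0 ≤ H l xb) ∨ (H l xb = 0 ∧ 0 ≤ G l xb) := by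
        by_contra hc; exact hne (hxiz l hc)
      rcases hact with ⟨hG0, hH⟩ | ⟨hH0, hG⟩
      · rcases hH.lt_or_eq with hH' | hH'
        · exact Or.inl (h0p l hG0 hH')
        · exact h00 l hG0 hH'.symm
      · rcases hG.lt_or_eq with hG' | hG'
        · exact Or.inr (hp0 l hG' hH0)
        · exact h00 l hG'.symm hH0
    refine ⟨lam, rho, fun l => xi l * alpha l, fun l => xi l * beta l,
      hlam, hlamz, ?_, ?_, ?_, ?_, ?_, ?_⟩
    · intro l
      by_cases hne : xi l = 0
      · simp [hne]
      · rcases hcase l hne with ⟨ha, hb⟩ | ⟨ha, hb⟩ <;> simp [ha, hb, hxi l]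
    · intro l hl
      by_cases hne : xi l = 0
      · simp [hne]
      · have hact : (G l xb = 0 ∧ 0 ≤ H l xb) ∨ (H l xb = 0 ∧ 0 ≤ G l xb) := by
          by_contra hc; exact hne (hxiz l hc)
        have hH0 : H l xb = 0 ∧ 0 ≤ G l xb := by tauto
        have hGpos : 0 < G l xb := by
          rcases hH0.2.lt_or_eq with h' | h'
          · exact h'
          · exact absurd ⟨h'.symm, hH0.1.ge⟩ hl
        simp [(hp0 l hGpos hH0.1).1]
    · intro l
      by_cases hne : xi l = 0
      · simp [hne]
      · rcases hcase l hne with ⟨ha, hb⟩ | ⟨ha, hb⟩ <;> simp [ha, hb, hxi l]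
    · intro l hl
      by_cases hne : xi l = 0
      · simp [hne]
      · have hact : (G l xb = 0 ∧ 0 ≤ H l xb) ∨ (H l xb = 0 ∧ 0 ≤ G l xb) := by
          by_contra hc; exact hne (hxiz l hc)
        have hG0 : G l xb = 0 ∧ 0 ≤ H l xb := by tauto
        have hHpos : 0 < H l xb := by
          rcases hG0.2.lt_or_eq with h' | h'
          · exact h'
          · exact absurd ⟨h'.symm, hG0.1.ge⟩ hl
        simp [(h0p l hG0.1 hHpos).2]
    · intro l hG0 hH0
      by_cases hne : xi l = 0
      · simp [hne]
      · rcases hcase l hne with ⟨ha, hb⟩ | ⟨ha, hb⟩ <;> simp [ha, hb]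
    · have key : (∑ l, (xi l * alpha l) • fderiv ℝ (G l) xb)
          + (∑ l, (xi l * beta l) • fderiv ℝ (H l) xb)
          = ∑ l, xi l • (alpha l • fderiv ℝ (G l) xb + beta l • fderiv ℝ (H l) xb) := by
        rw [← Finset.sum_add_distrib]
        refine Finset.sum_congr rfl fun l _ => ?_
        rw [smul_add, smul_smul, smul_smul]
      rw [add_assoc _ (∑ l, (xi l * alpha l) • fderiv ℝ (G l) xb), key]
      exact heq
end
end

section
/- For a feasible point x̄ ∈ X of (MPOC), the following three statements are equivalent: (a) x̄ is W-stationary for (MPOC); (b) there exist λ_i ≥ 0 (i ∈ I^g(x̄)), ρ_j ∈ ℝ (j ∈ P), ξ_l ≥ 0 and (α_l, β_l) ∈ ℝ² (l ∈ 𝓘(x̄) = I^{0+}(x̄) ∪ I^{+0}(x̄) ∪ I^{00}(x̄)) with (α_l, β_l) = (1,0) for l ∈ I^{0+}(x̄), (α_l, β_l) = (0,1) for l ∈ I^{+0}(x̄), and (α_l − 1)² + (β_l − 1)² ≤ 1 for l ∈ I^{00}(x̄), such that 0 = ∇f(x̄) + Σ λ_i ∇g_i(x̄) + Σ ρ_j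 ∇h_j(x̄) + Σ_{l ∈ 𝓘(x̄)} ξ_l (α_l ∇G_l(x̄) + β_l ∇H_l(x̄)) (the KKT system of MPOC(φ_FB) w.r.t. Clarke's subdifferential); (c) the same system is solvable with the condition for l ∈ I^{00}(x̄) strengthened to (α_l − 1)² + (β_l − 1)² = 1 (the KKT system of MPOC(φ_FB) w.r.t. Mordukhovich's subdifferential). -/
noncomputable section

open Filter Topology

variable {n m p q : ℕ}

private lemma circle_lemma (mu nu : ℝ) (hmu : 0 ≤ mu) (hnu : 0 ≤ nu)
    (hne : ¬(mu = 0 ∧ nu = 0)) :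
    ∃ xi α β : ℝ, 0 ≤ xi ∧ xi * α = mu ∧ xi * β = nu ∧
      (α - 1) ^ 2 + (β - 1) ^ 2 = 1 := by
  have hd : 0 < mu ^ 2 + nu ^ 2 := by
    rcases not_and_or.mp hne with hh | hh <;> positivity
  have hr2 : Real.sqrt (2 * mu * nu) ^ 2 = 2 * mu * nu :=
    Real.sq_sqrt (by positivity)
  have hr0 : 0 ≤ Real.sqrt (2 * mu * nu) := Real.sqrt_nonneg _
  set r := Real.sqrt (2 * mu * nu) with hrdef
  have hsr : r < mu + nu := by nlinarith [hr2, hr0, hd, hmu, hnu]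
  set t := (mu + nu - r) / (mu ^ 2 + nu ^ 2) with htdef
  have ht : 0 < t := div_pos (by linarith) hd
  have htd : t * (mu ^ 2 + nu ^ 2) = mu + nu - r := div_mul_cancel₀ _ hd.ne'
  refine ⟨t⁻¹, t * mu, t * nu, by positivity, ?_, ?_, ?_⟩
  · rw [← mul_assoc, inv_mul_cancel₀ ht.ne', one_mul]
  · rw [← mul_assoc, inv_mul_cancel₀ ht.ne', one_mul]
  · have key : (mu ^ 2 + nu ^ 2) * ((t * mu - 1) ^ 2 + (t * nu - 1) ^ 2)
        = (mu ^ 2 + nu ^ 2) * 1 := by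
      have expand : (mu ^ 2 + nu ^ 2) * ((t * mu - 1) ^ 2 + (t * nu - 1) ^ 2)
          = (t * (mu ^ 2 + nu ^ 2)) ^ 2
            - 2 * (t * (mu ^ 2 + nu ^ 2)) * (mu + nu) + 2 * (mu ^ 2 + nu ^ 2) := by
        ring
      rw [expand, htd]
      nlinarith [hr2]
    exact mul_left_cancel₀ hd.ne' key

private lemma pointwise_lemma (a b mu nu : ℝ) (hmu : 0 ≤ mu) (hnu : 0 ≤ nu)
    (hmu0 : ¬(a = 0 ∧ 0 ≤ b) → mu = 0) (hnu0 : ¬(b = 0 ∧ 0 ≤ a) → nu = 0) :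
    ∃ xi α β : ℝ, 0 ≤ xi ∧
      (¬((a = 0 ∧ 0 ≤ b) ∨ (b = 0 ∧ 0 ≤ a)) → xi = 0) ∧
      (a = 0 → 0 < b → α = 1 ∧ β = 0) ∧
      (0 < a → b = 0 → α = 0 ∧ β = 1) ∧
      (a = 0 → b = 0 → (α - 1) ^ 2 + (β - 1) ^ 2 = 1) ∧
      xi * α = mu ∧ xi * β = nu := by
  by_cases h00 : a = 0 ∧ b = 0
  · by_cases hz : mu = 0 ∧ nu = 0
    · refine ⟨0, 1, 0, le_refl 0, fun _ => rfl,
        fun _ hb => absurd (h00.2 ▸ hb) (lt_irrefl 0),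
        fun ha _ => absurd (h00.1 ▸ ha) (lt_irrefl 0),
        fun _ _ => by norm_num, by rw [hz.1]; ring, by rw [hz.2]; ring⟩
    · obtain ⟨xi, α, β, h1, h2, h3, h4⟩ := circle_lemma mu nu hmu hnu hz
      exact ⟨xi, α, β, h1,
        fun hc => absurd (Or.inl ⟨h00.1, h00.2.symm.le⟩) hc,
        fun _ hb => absurd (h00.2 ▸ hb) (lt_irrefl 0),
        fun ha _ => absurd (h00.1 ▸ ha) (lt_irrefl 0),
        fun _ _ => h4, h2, h3⟩
  · by_cases ha : a = 0 ∧ 0 < b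
    · have hnu' : nu = 0 := hnu0 (fun hc => absurd (hc.1 ▸ ha.2) (lt_irrefl 0))
      exact ⟨mu, 1, 0, hmu, fun hc => absurd (Or.inl ⟨ha.1, ha.2.le⟩) hc,
        fun _ _ => ⟨rfl, rfl⟩,
        fun hlt _ => absurd (ha.1 ▸ hlt) (lt_irrefl 0),
        fun _ hb => absurd (hb ▸ ha.2) (lt_irrefl 0),
        mul_one mu, by rw [mul_zero, hnu']⟩
    · by_cases hb : 0 < a ∧ b = 0
      · have hmu' : mu = 0 := hmu0 (fun hc => absurd (hc.1 ▸ hb.1) (lt_irrefl 0))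
        exact ⟨nu, 0, 1, hnu, fun hc => absurd (Or.inr ⟨hb.2, hb.1.le⟩) hc,
          fun ha0 _ => absurd (ha0 ▸ hb.1) (lt_irrefl 0),
          fun _ _ => ⟨rfl, rfl⟩,
          fun ha0 _ => absurd (ha0 ▸ hb.1) (lt_irrefl 0),
          by rw [mul_zero, hmu'], mul_one nu⟩
      · have hmu' : mu = 0 := by
          apply hmu0; rintro ⟨ha0, hb0⟩
          rcases hb0.lt_or_eq with hh | hh
          · exact ha ⟨ha0, hh⟩
          · exact h00 ⟨ha0, hh.symm⟩
        have hnu' : nu = 0 := by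
          apply hnu0; rintro ⟨hb0', ha0⟩
          rcases ha0.lt_or_eq with hh | hh
          · exact hb ⟨hh, hb0'⟩
          · exact h00 ⟨hh.symm, hb0'⟩
        exact ⟨0, 1, 0, le_refl 0, fun _ => rfl, fun _ _ => ⟨rfl, rfl⟩,
          fun h0a hb0 => absurd ⟨h0a, hb0⟩ hb,
          fun ha0 hb0 => absurd ⟨ha0, hb0⟩ h00,
          by rw [hmu']; ring, by rw [hnu']; ring⟩

/-- For a feasible point of (MPOC), W-stationarity, the KKT system of MPOC(φ_FB) w.r.t.
Clarke's subdifferential, and the KKT system of MPOC(φ_FB) w.r.t. Mordukhovich's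
subdifferential are all equivalent. -/
theorem wstationary_iff_kkt_phiFB {n m p q : ℕ} (f : (Fin n → ℝ) → ℝ)
    (g : Fin m → (Fin n → ℝ) → ℝ) (h : Fin p → (Fin n → ℝ) → ℝ)
    (G H : Fin q → (Fin n → ℝ) → ℝ)
    (hf : ContDiff ℝ 1 f) (hg : ∀ i, ContDiff ℝ 1 (g i)) (hh : ∀ j, ContDiff ℝ 1 (h j))
    (hG : ∀ l, ContDiff ℝ 1 (G l)) (hH : ∀ l, ContDiff ℝ 1 (H l))
    (xb : Fin n → ℝ) (hxb : xb ∈ feasMPOC g h G H) :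
    (WStat f g h G H xb ↔
      KKTGen f g h G H xb (fun a b => (a - 1) ^ 2 + (b - 1) ^ 2 ≤ 1)) ∧
    (KKTGen f g h G H xb (fun a b => (a - 1) ^ 2 + (b - 1) ^ 2 ≤ 1) ↔
      KKTGen f g h G H xb (fun a b => (a - 1) ^ 2 + (b - 1) ^ 2 = 1)) := by
  have dirWM : WStat f g h G H xb →
      KKTGen f g h G H xb (fun a b => (a - 1) ^ 2 + (b - 1) ^ 2 = 1) := by
    rintro ⟨lam, rho, mu, nu, hlam, hlams, hmu, hmus, hnu, hnus, heq⟩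
    choose xi alpha beta hxi hsupp hA hB hE hPm hPn using
      fun l => pointwise_lemma (G l xb) (H l xb) (mu l) (nu l) (hmu l) (hnu l)
        (hmus l) (hnus l)
    refine ⟨lam, rho, xi, alpha, beta, hlam, hlams, hxi, hsupp, hA, hB, hE, ?_⟩
    have hsum : (∑ l, xi l • (alpha l • fderiv ℝ (G l) xb + beta l • fderiv ℝ (H l) xb))
        = (∑ l, mu l • fderiv ℝ (G l) xb) + (∑ l, nu l • fderiv ℝ (H l) xb) := by
      rw [← Finset.sum_add_distrib]
      refine Finset.sum_congr rfl fun l _ => ?_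
      rw [smul_add, smul_smul, smul_smul, hPm l, hPn l]
    rw [hsum, ← add_assoc]
    exact heq
  have dirMC : KKTGen f g h G H xb (fun a b => (a - 1) ^ 2 + (b - 1) ^ 2 = 1) →
      KKTGen f g h G H xb (fun a b => (a - 1) ^ 2 + (b - 1) ^ 2 ≤ 1) := by
    rintro ⟨lam, rho, xi, alpha, beta, h1, h2, h3, h4, h5, h6, h7, h8⟩
    exact ⟨lam, rho, xi, alpha, beta, h1, h2, h3, h4, h5, h6,
      fun l hG0 hH0 => (h7 l hG0 hH0).le, h8⟩
  have dirCW : KKTGen f g h G H xb (fun a b => (a - 1) ^ 2 + (b - 1) ^ 2 ≤ 1) →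
      WStat f g h G H xb := by
    rintro ⟨lam, rho, xi, alpha, beta, hlam, hlams, hxi, hxis, hA, hB, hE, heq⟩
    refine ⟨lam, rho, fun l => xi l * alpha l, fun l => xi l * beta l,
      hlam, hlams, ?_, ?_, ?_, ?_, ?_⟩ <;> beta_reduce
    · intro l
      by_cases h1 : G l xb = 0 ∧ 0 ≤ H l xb
      · rcases h1.2.lt_or_eq with hlt | he
        · rw [(hA l h1.1 hlt).1, mul_one]; exact hxi l
        · have hcirc := hE l h1.1 he.symm
          have hα : 0 ≤ alpha l := by nlinarith [hcirc]
          exact mul_nonneg (hxi l) hα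
      · by_cases h2 : H l xb = 0 ∧ 0 ≤ G l xb
        · have hGpos : 0 < G l xb := by
            rcases h2.2.lt_or_eq with hlt | he
            · exact hlt
            · exact absurd ⟨he.symm, h2.1.symm.le⟩ h1
          rw [(hB l hGpos h2.1).1, mul_zero]
        · rw [hxis l (by tauto), zero_mul]
    · intro l hc
      by_cases h2 : H l xb = 0 ∧ 0 ≤ G l xb
      · have hGpos : 0 < G l xb := by
          rcases h2.2.lt_or_eq with hlt | he
          · exact hlt
          · exact absurd ⟨he.symm, h2.1.symm.le⟩ hc
        rw [(hB l hGpos h2.1).1, mul_zero]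
      · rw [hxis l (by tauto), zero_mul]
    · intro l
      by_cases h2 : H l xb = 0 ∧ 0 ≤ G l xb
      · rcases h2.2.lt_or_eq with hlt | he
        · rw [(hB l hlt h2.1).2, mul_one]; exact hxi l
        · have hcirc := hE l he.symm h2.1
          have hβ : 0 ≤ beta l := by nlinarith [hcirc]
          exact mul_nonneg (hxi l) hβ
      · by_cases h1 : G l xb = 0 ∧ 0 ≤ H l xb
        · have hHpos : 0 < H l xb := by
            rcases h1.2.lt_or_eq with hlt | he
            · exact hlt
            · exact absurd ⟨he.symm, h1.1.symm.le⟩ h2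
          rw [(hA l h1.1 hHpos).2, mul_zero]
        · rw [hxis l (by tauto), zero_mul]
    · intro l hc
      by_cases h1 : G l xb = 0 ∧ 0 ≤ H l xb
      · have hHpos : 0 < H l xb := by
          rcases h1.2.lt_or_eq with hlt | he
          · exact hlt
          · exact absurd ⟨he.symm, h1.1.symm.le⟩ hc
        rw [(hA l h1.1 hHpos).2, mul_zero]
      · rw [hxis l (by tauto), zero_mul]
    · have hsum : (∑ l, (xi l * alpha l) • fderiv ℝ (G l) xb)
          + (∑ l, (xi l * beta l) • fderiv ℝ (H l) xb)
          = ∑ l, xi l • (alpha l • fderiv ℝ (G l) xb + beta l • fderiv ℝ (H l) xb) := by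
        rw [← Finset.sum_add_distrib]
        refine Finset.sum_congr rfl fun l _ => ?_
        rw [smul_add, smul_smul, smul_smul]
      rw [add_assoc, hsum]
      exact heq
  exact ⟨⟨fun w => dirMC (dirWM w), dirCW⟩, fun k => dirWM (dirCW k), dirMC⟩
end
end

section
/- Let x̄ ∈ X be a locally (respectively globally) optimal solution of (MPOC), and let ȳ, z̄ ∈ ℝ^q be the slack vectors defined by: ȳ_l = 0 for l ∈ I^{-0}(x̄) ∪ I^{-+}(x̄) ∪ I^{0+}(x̄) ∪ I^{--}(x̄) ∪ I^{00}(x̄), ȳ_l = 1 for l ∈ I^{0-}(x̄), ȳ_l = 2 G_l(x̄) for l ∈ I^{+-}(x̄) ∪ I^{+0}(x̄); z̄_l = 0 for l ∈ I^{0-}(x̄) ∪ I^{+-}(x̄) ∪ I^{+0}(x̄) ∪ I^{--}(x̄) ∪ I^{00}(x̄), z̄_l = 1 for l ∈ I^{-0}(x̄), z̄_l = 2 H_l(x̄) for l ∈ I^{-+}(x̄) ∪ I^{0+}(x̄). Then (x̄, ȳ, z̄) is a locally (respectively globally) optimal solution of (CC-MPOC). -/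
noncomputable section

open Filter Topology

variable {n m p q : ℕ}

/-- Local (resp. global) minimizers of (MPOC), augmented by the canonical slack vectors,
are local (resp. global) minimizers of (CC-MPOC). -/
theorem minimizer_MPOC_to_CC {n m p q : ℕ} (f : (Fin n → ℝ) → ℝ)
    (g : Fin m → (Fin n → ℝ) → ℝ) (h : Fin p → (Fin n → ℝ) → ℝ)
    (G H : Fin q → (Fin n → ℝ) → ℝ)
    (hf : ContDiff ℝ 1 f) (hg : ∀ i, ContDiff ℝ 1 (g i)) (hh : ∀ j, ContDiff ℝ 1 (h j))
    (hG : ∀ l, ContDiff ℝ 1 (G l)) (hH : ∀ l, ContDiff ℝ 1 (H l))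
    (xb : Fin n → ℝ) (hxb : xb ∈ feasMPOC g h G H)
    (yb zb : Fin q → ℝ)
    (hy : ∀ l, ((G l xb < 0 ∨ (G l xb = 0 ∧ 0 ≤ H l xb)) → yb l = 0) ∧
      ((G l xb = 0 ∧ H l xb < 0) → yb l = 1) ∧ (0 < G l xb → yb l = 2 * G l xb))
    (hz : ∀ l, ((H l xb < 0 ∨ (H l xb = 0 ∧ 0 ≤ G l xb)) → zb l = 0) ∧
      ((H l xb = 0 ∧ G l xb < 0) → zb l = 1) ∧ (0 < H l xb → zb l = 2 * H l xb)) :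
    (IsLocalMinOn f (feasMPOC g h G H) xb →
      IsLocalMinOn (fun w : (Fin n → ℝ) × (Fin q → ℝ) × (Fin q → ℝ) => f w.1)
        (feasCC g h G H) (xb, yb, zb)) ∧
    (IsMinOn f (feasMPOC g h G H) xb →
      IsMinOn (fun w : (Fin n → ℝ) × (Fin q → ℝ) × (Fin q → ℝ) => f w.1)
        (feasCC g h G H) (xb, yb, zb)) := by
  have key : ∀ w ∈ feasCC g h G H, w.1 ∈ feasMPOC g h G H := by
    rintro ⟨x, y, z⟩ ⟨h1, h2, h3, h4, h5, h6, h7⟩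
    refine ⟨h1, h2, fun l => ?_⟩
    rcases mul_eq_zero.1 (h7 l) with hy0 | hz0
    · left; have := h3 l; simp only at hy0 ⊢; linarith
    · right; have := h4 l; simp only at hz0 ⊢; linarith
  constructor
  · intro hmin
    have hmin' : ∀ᶠ x in 𝓝 xb, x ∈ feasMPOC g h G H → f xb ≤ f x :=
      eventually_nhdsWithin_iff.mp hmin
    have hproj : Filter.Tendsto (fun w : (Fin n → ℝ) × (Fin q → ℝ) × (Fin q → ℝ) => w.1)
        (𝓝 (xb, yb, zb)) (𝓝 xb) := continuous_fst.continuousAt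
    have := hproj.eventually hmin'
    rw [IsLocalMinOn, IsMinFilter]
    rw [eventually_nhdsWithin_iff]
    filter_upwards [this] with w hw hwfeas
    exact hw (key w hwfeas)
  · intro hmin w hwfeas
    exact hmin (key w hwfeas)
end
end

section
/- Let (x̃, ỹ, z̃) ∈ ℝⁿ × ℝ^q × ℝ^q be a globally optimal solution of (CC-MPOC). Then x̃ is a globally optimal solution of (MPOC). -/
noncomputable section

open Filter Topology

variable {n m p q : ℕ}

/-- The `x`-part of a globally optimal solution of (CC-MPOC) is a globally optimal
solution of (MPOC). -/
theorem globalMin_CC_to_MPOC {n m p q : ℕ} (f : (Fin n → ℝ) → ℝ)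
    (g : Fin m → (Fin n → ℝ) → ℝ) (h : Fin p → (Fin n → ℝ) → ℝ)
    (G H : Fin q → (Fin n → ℝ) → ℝ)
    (hf : ContDiff ℝ 1 f) (hg : ∀ i, ContDiff ℝ 1 (g i)) (hh : ∀ j, ContDiff ℝ 1 (h j))
    (hG : ∀ l, ContDiff ℝ 1 (G l)) (hH : ∀ l, ContDiff ℝ 1 (H l))
    (xt : Fin n → ℝ) (yt zt : Fin q → ℝ)
    (hfeas : (xt, yt, zt) ∈ feasCC g h G H)
    (hopt : IsMinOn (fun w : (Fin n → ℝ) × (Fin q → ℝ) × (Fin q → ℝ) => f w.1)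
      (feasCC g h G H) (xt, yt, zt)) :
    xt ∈ feasMPOC g h G H ∧ IsMinOn f (feasMPOC g h G H) xt := by
  obtain ⟨hg0, hh0, hGy, hHz, hy0, hz0, hyz⟩ := hfeas
  constructor
  · refine ⟨hg0, hh0, fun l => ?_⟩
    rcases mul_eq_zero.mp (hyz l) with hy | hz
    · exact Or.inl (by have := hGy l; simp only at this; linarith [hy ▸ this])
    · exact Or.inr (by have := hHz l; simp only at this; linarith [hz ▸ this])
  · intro x hx
    obtain ⟨hxg, hxh, hxGH⟩ := hx
    set y : Fin q → ℝ := fun l => max (G l x) 0 with hy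
    set z : Fin q → ℝ := fun l => max (H l x) 0 with hz
    have hmem : (x, y, z) ∈ feasCC g h G H := by
      refine ⟨hxg, hxh, fun l => ?_, fun l => ?_, fun l => le_max_right _ _,
        fun l => le_max_right _ _, fun l => ?_⟩
      · simp [hy, le_max_left]
      · simp [hz, le_max_left]
      · rcases hxGH l with hl | hl
        · simp [hy, max_eq_right hl]
        · simp [hz, max_eq_right hl]
    exact hopt hmem
end
end

section
/- Let (x̄, ȳ, z̄) ∈ ℝⁿ × ℝ^q × ℝ^q be a locally optimal solution of (CC-MPOC) and assume that the index sets I^{-0}(x̄), I^{0-}(x̄), and I^{00}(x̄) are empty. Then x̄ is a local minimizer of (MPOC). -/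
noncomputable section

open Filter Topology

variable {n m p q : ℕ}

/-- If `(x̄, ȳ, z̄)` is a local minimizer of (CC-MPOC) and `I^{-0}(x̄)`, `I^{0-}(x̄)`,
`I^{00}(x̄)` are empty, then `x̄` is a local minimizer of (MPOC). -/
theorem localMin_CC_to_MPOC {n m p q : ℕ} (f : (Fin n → ℝ) → ℝ)
    (g : Fin m → (Fin n → ℝ) → ℝ) (h : Fin p → (Fin n → ℝ) → ℝ)
    (G H : Fin q → (Fin n → ℝ) → ℝ)
    (hf : ContDiff ℝ 1 f) (hg : ∀ i, ContDiff ℝ 1 (g i)) (hh : ∀ j, ContDiff ℝ 1 (h j))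
    (hG : ∀ l, ContDiff ℝ 1 (G l)) (hH : ∀ l, ContDiff ℝ 1 (H l))
    (xb : Fin n → ℝ) (yb zb : Fin q → ℝ)
    (hfeas : (xb, yb, zb) ∈ feasCC g h G H)
    (hloc : IsLocalMinOn (fun w : (Fin n → ℝ) × (Fin q → ℝ) × (Fin q → ℝ) => f w.1)
      (feasCC g h G H) (xb, yb, zb))
    (hIm0 : ∀ l, ¬(G l xb < 0 ∧ H l xb = 0))
    (hI0m : ∀ l, ¬(G l xb = 0 ∧ H l xb < 0))
    (hI00 : ∀ l, ¬(G l xb = 0 ∧ H l xb = 0)) :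
    xb ∈ feasMPOC g h G H ∧ IsLocalMinOn f (feasMPOC g h G H) xb := by
  obtain ⟨hg0, hh0, hGy, hHz, hy0, hz0, hyz⟩ := hfeas
  have hxfeas : xb ∈ feasMPOC g h G H := by
    refine ⟨hg0, hh0, fun l => ?_⟩
    rcases mul_eq_zero.1 (hyz l) with hy | hz
    · exact Or.inl (by have := hGy l; simp only at this ⊢; linarith)
    · exact Or.inr (by have := hHz l; simp only at this ⊢; linarith)
  refine ⟨hxfeas, ?_⟩
  set Y : (Fin n → ℝ) → Fin q → ℝ := fun x l => if zb l = 0 then max (G l x) (yb l) else 0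
    with hYdef
  set Z : (Fin n → ℝ) → Fin q → ℝ := fun x l => if zb l = 0 then 0 else max (H l x) (zb l)
    with hZdef
  have hYxb : Y xb = yb := by
    funext l; simp only [hYdef]
    split_ifs with hzb
    · exact max_eq_right (by have := hGy l; linarith)
    · rcases mul_eq_zero.1 (hyz l) with hy | hz
      · exact hy.symm
      · exact absurd hz hzb
  have hZxb : Z xb = zb := by
    funext l; simp only [hZdef]
    split_ifs with hzb
    · exact hzb.symm
    · exact max_eq_right (by have := hHz l; linarith)
  -- continuity of the slack map
  have hYc : Continuous Y := by
    refine continuous_pi fun l => ?_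
    simp only [hYdef]
    split_ifs with hzb
    · exact ((hG l).continuous).max continuous_const
    · exact continuous_const
  have hZc : Continuous Z := by
    refine continuous_pi fun l => ?_
    simp only [hZdef]
    split_ifs with hzb
    · exact continuous_const
    · exact ((hH l).continuous).max continuous_const
  have hPhi : Filter.Tendsto (fun x => ((x, Y x, Z x) :
      (Fin n → ℝ) × (Fin q → ℝ) × (Fin q → ℝ))) (𝓝 xb) (𝓝 (xb, yb, zb)) := by
    have : Filter.Tendsto (fun x => ((x, Y x, Z x) :
        (Fin n → ℝ) × (Fin q → ℝ) × (Fin q → ℝ))) (𝓝 xb) (𝓝 (xb, Y xb, Z xb)) :=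
      (continuous_id.prodMk (hYc.prodMk hZc)).continuousAt
    rwa [hYxb, hZxb] at this
  -- key sign facts on a neighborhood within the feasible set
  have key : ∀ᶠ x in 𝓝[feasMPOC g h G H] xb,
      ∀ l, (zb l = 0 → H l x ≤ 0) ∧ (zb l ≠ 0 → G l x ≤ 0) := by
    rw [Filter.eventually_all]
    intro l
    by_cases hzb : zb l = 0
    · have hHle : H l xb ≤ 0 := by have := hHz l; linarith
      rcases lt_or_eq_of_le hHle with hlt | heq
      · have h1 : ∀ᶠ x in 𝓝 xb, H l x < 0 :=
          ((hH l).continuous.continuousAt).preimage_mem_nhds (Iio_mem_nhds hlt)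
        filter_upwards [eventually_nhdsWithin_of_eventually_nhds h1] with x hx
        exact ⟨fun _ => hx.le, fun h' => absurd hzb h'⟩
      · -- H l xb = 0, so G l xb > 0
        have hGpos : 0 < G l xb := by
          rcases lt_trichotomy (G l xb) 0 with h1 | h1 | h1
          · exact absurd ⟨h1, heq⟩ (hIm0 l)
          · exact absurd ⟨h1, heq⟩ (hI00 l)
          · exact h1
        have h1 : ∀ᶠ x in 𝓝 xb, 0 < G l x :=
          ((hG l).continuous.continuousAt).preimage_mem_nhds (Ioi_mem_nhds hGpos)
        filter_upwards [eventually_nhdsWithin_of_eventually_nhds h1,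
          eventually_mem_nhdsWithin] with x hx hxf
        refine ⟨fun _ => ?_, fun h' => absurd hzb h'⟩
        rcases hxf.2.2 l with h2 | h2
        · linarith
        · exact h2
    · -- zb l > 0, so yb l = 0 and G l xb ≤ 0
      have hyb0 : yb l = 0 := by
        rcases mul_eq_zero.1 (hyz l) with hy | hz
        · exact hy
        · exact absurd hz hzb
      have hGle : G l xb ≤ 0 := by have := hGy l; linarith
      rcases lt_or_eq_of_le hGle with hlt | heq
      · have h1 : ∀ᶠ x in 𝓝 xb, G l x < 0 :=
          ((hG l).continuous.continuousAt).preimage_mem_nhds (Iio_mem_nhds hlt)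
        filter_upwards [eventually_nhdsWithin_of_eventually_nhds h1] with x hx
        exact ⟨fun h' => absurd h' hzb, fun _ => hx.le⟩
      · -- G l xb = 0, so H l xb > 0
        have hHpos : 0 < H l xb := by
          rcases lt_trichotomy (H l xb) 0 with h1 | h1 | h1
          · exact absurd ⟨heq, h1⟩ (hI0m l)
          · exact absurd ⟨heq, h1⟩ (hI00 l)
          · exact h1
        have h1 : ∀ᶠ x in 𝓝 xb, 0 < H l x :=
          ((hH l).continuous.continuousAt).preimage_mem_nhds (Ioi_mem_nhds hHpos)
        filter_upwards [eventually_nhdsWithin_of_eventually_nhds h1,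
          eventually_mem_nhdsWithin] with x hx hxf
        refine ⟨fun h' => absurd h' hzb, fun _ => ?_⟩
        rcases hxf.2.2 l with h2 | h2
        · exact h2
        · linarith
  -- transfer the local minimality
  have hU : ∀ᶠ w in 𝓝 ((xb, yb, zb) : (Fin n → ℝ) × (Fin q → ℝ) × (Fin q → ℝ)),
      w ∈ feasCC g h G H → f xb ≤ f w.1 := by
    have := hloc
    rw [IsLocalMinOn, IsMinFilter] at this
    exact eventually_nhdsWithin_iff.mp this
  have hU' : ∀ᶠ x in 𝓝 xb,
      ((x, Y x, Z x) ∈ feasCC g h G H → f xb ≤ f x) := hPhi.eventually hU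
  rw [IsLocalMinOn, IsMinFilter]
  filter_upwards [key, eventually_mem_nhdsWithin,
    eventually_nhdsWithin_of_eventually_nhds hU'] with x hkey hxf hU''
  refine hU'' ?_
  obtain ⟨hgx, hhx, _⟩ := hxf
  refine ⟨hgx, hhx, fun l => ?_, fun l => ?_, fun l => ?_, fun l => ?_, fun l => ?_⟩
  · simp only [hYdef]
    split_ifs with hzb
    · simp [le_max_left]
    · have := (hkey l).2 hzb
      simpa using this
  · simp only [hZdef]
    split_ifs with hzb
    · have := (hkey l).1 hzb
      simpa using this
    · simp [le_max_left]
  · simp only [hYdef]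
    split_ifs with hzb
    · exact le_max_of_le_right (hy0 l)
    · exact le_refl 0
  · simp only [hZdef]
    split_ifs with hzb
    · exact le_refl 0
    · exact le_max_of_le_right (hz0 l)
  · simp only [hYdef, hZdef]
    split_ifs with hzb
    · ring
    · ring
end
end

section
/- Let x̄ ∈ X be a W-stationary (respectively M-stationary, S-stationary) point of (MPOC), and let ȳ, z̄ ∈ ℝ^q be the slack vectors defined by: ȳ_l = 0 for l ∈ I^{-0}(x̄) ∪ I^{-+}(x̄) ∪ I^{0+}(x̄) ∪ I^{--}(x̄) ∪ I^{00}(x̄), ȳ_l = 1 for l ∈ I^{0-}(x̄), ȳ_l = 2 G_l(x̄) for l ∈ I^{+-}(x̄) ∪ I^{+0}(x̄); z̄_l = 0 for l ∈ I^{0-}(x̄) ∪ I^{+-}(x̄) ∪ I^{+0}(x̄) ∪ I^{--}(x̄) ∪ I^{00}(x̄), z̄_l = 1 for l ∈ I^{-0}(x̄), z̄_l = 2 H_l(x̄) for l ∈ I^{-+}(x̄) ∪ I^{0+}(x̄). Then (x̄, ȳ, z̄) is C_CC-stationary (respectively M_CC-stationary, S_CC-stationary) for (CC-MPOC). -/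
noncomputable section

open Filter Topology

variable {n m p q : ℕ}

lemma statCC_aux {n m p q : ℕ} (f : (Fin n → ℝ) → ℝ)
    (g : Fin m → (Fin n → ℝ) → ℝ) (h : Fin p → (Fin n → ℝ) → ℝ)
    (G H : Fin q → (Fin n → ℝ) → ℝ) (xb : Fin n → ℝ) (yb zb : Fin q → ℝ)
    (hy : ∀ l, ((G l xb < 0 ∨ (G l xb = 0 ∧ 0 ≤ H l xb)) → yb l = 0) ∧
      ((G l xb = 0 ∧ H l xb < 0) → yb l = 1) ∧ (0 < G l xb → yb l = 2 * G l xb))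
    (hz : ∀ l, ((H l xb < 0 ∨ (H l xb = 0 ∧ 0 ≤ G l xb)) → zb l = 0) ∧
      ((H l xb = 0 ∧ G l xb < 0) → zb l = 1) ∧ (0 < H l xb → zb l = 2 * H l xb))
    (lam : Fin m → ℝ) (rho : Fin p → ℝ) (mu nu : Fin q → ℝ)
    (hlam0 : ∀ i, 0 ≤ lam i) (hlam : ∀ i, g i xb ≠ 0 → lam i = 0)
    (hmu0 : ∀ l, 0 ≤ mu l) (hmu : ∀ l, ¬(G l xb = 0 ∧ 0 ≤ H l xb) → mu l = 0)
    (hnu0 : ∀ l, 0 ≤ nu l) (hnu : ∀ l, ¬(H l xb = 0 ∧ 0 ≤ G l xb) → nu l = 0)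
    (heq : fderiv ℝ f xb + (∑ i, lam i • fderiv ℝ (g i) xb)
      + (∑ j, rho j • fderiv ℝ (h j) xb)
      + (∑ l, mu l • fderiv ℝ (G l) xb) + (∑ l, nu l • fderiv ℝ (H l) xb) = 0)
    (extra : ℝ → ℝ → Prop)
    (hextra : ∀ l, yb l = 0 → zb l = 0 → extra (-(mu l)) (-(nu l))) :
    StatCC f g h G H xb yb zb extra := by
  refine ⟨lam, rho, mu, nu, fun l => -(mu l), fun l => -(nu l), hlam0, hlam, hmu0, ?_,
    hnu0, ?_, heq, ?_, ?_, ?_, ?_, hextra⟩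
  · intro l
    by_cases hGH : G l xb = 0 ∧ 0 ≤ H l xb
    · have hyl : yb l = 0 := (hy l).1 (Or.inr hGH)
      rw [hyl, hGH.1]; ring
    · rw [hmu l hGH]; ring
  · intro l
    by_cases hGH : H l xb = 0 ∧ 0 ≤ G l xb
    · have hzl : zb l = 0 := (hz l).1 (Or.inr hGH)
      rw [hzl, hGH.1]; ring
    · rw [hnu l hGH]; ring
  · intro l _; ring
  · intro l hyl _
    apply hmu l
    rintro ⟨hG0, hH⟩
    have := (hy l).1 (Or.inr ⟨hG0, hH⟩)
    linarith
  · intro l _; ring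
  · intro l _ hzl
    apply hnu l
    rintro ⟨hH0, hG⟩
    have := (hz l).1 (Or.inr ⟨hH0, hG⟩)
    linarith

/-- W- (M-, S-) stationary points of (MPOC), augmented by the canonical slack vectors,
are C_CC- (M_CC-, S_CC-) stationary for (CC-MPOC). -/
theorem statMPOC_to_statCC {n m p q : ℕ} (f : (Fin n → ℝ) → ℝ)
    (g : Fin m → (Fin n → ℝ) → ℝ) (h : Fin p → (Fin n → ℝ) → ℝ)
    (G H : Fin q → (Fin n → ℝ) → ℝ)
    (hf : ContDiff ℝ 1 f) (hg : ∀ i, ContDiff ℝ 1 (g i)) (hh : ∀ j, ContDiff ℝ 1 (h j))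
    (hG : ∀ l, ContDiff ℝ 1 (G l)) (hH : ∀ l, ContDiff ℝ 1 (H l))
    (xb : Fin n → ℝ) (hxb : xb ∈ feasMPOC g h G H)
    (yb zb : Fin q → ℝ)
    (hy : ∀ l, ((G l xb < 0 ∨ (G l xb = 0 ∧ 0 ≤ H l xb)) → yb l = 0) ∧
      ((G l xb = 0 ∧ H l xb < 0) → yb l = 1) ∧ (0 < G l xb → yb l = 2 * G l xb))
    (hz : ∀ l, ((H l xb < 0 ∨ (H l xb = 0 ∧ 0 ≤ G l xb)) → zb l = 0) ∧
      ((H l xb = 0 ∧ G l xb < 0) → zb l = 1) ∧ (0 < H l xb → zb l = 2 * H l xb)) :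
    (WStat f g h G H xb → StatCC f g h G H xb yb zb (fun a b => 0 ≤ a * b)) ∧
    (MStat f g h G H xb →
      StatCC f g h G H xb yb zb (fun a b => a * b = 0 ∨ (0 < a ∧ 0 < b))) ∧
    (SStat f g h G H xb → StatCC f g h G H xb yb zb (fun a b => 0 ≤ a ∧ 0 ≤ b)) := by
  refine ⟨?_, ?_, ?_⟩
  · rintro ⟨lam, rho, mu, nu, hlam0, hlam, hmu0, hmu, hnu0, hnu, heq⟩
    refine statCC_aux f g h G H xb yb zb hy hz lam rho mu nu hlam0 hlam hmu0 hmu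
      hnu0 hnu heq _ ?_
    intro l _ _
    rw [neg_mul_neg]
    exact mul_nonneg (hmu0 l) (hnu0 l)
  · rintro ⟨lam, rho, mu, nu, hlam0, hlam, hmu0, hmu, hnu0, hnu, hM, heq⟩
    refine statCC_aux f g h G H xb yb zb hy hz lam rho mu nu hlam0 hlam hmu0 hmu
      hnu0 hnu heq _ ?_
    intro l hyl hzl
    left
    rw [neg_mul_neg]
    by_cases hG : G l xb = 0
    · by_cases hH : H l xb = 0
      · exact hM l hG hH
      · rcases lt_or_gt_of_ne hH with hHlt | hHgt
        · have := (hy l).2.1 ⟨hG, hHlt⟩; linarith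
        · have := (hz l).2.2 hHgt
          have hnul : nu l = 0 := by
            apply hnu l; rintro ⟨hH0, _⟩; exact hH hH0
          rw [hnul]; ring
    · have hmul : mu l = 0 := by
        apply hmu l; rintro ⟨hG0, _⟩; exact hG hG0
      rw [hmul]; ring
  · rintro ⟨lam, rho, mu, nu, hlam0, hlam, hmu0, hmu, hnu0, hnu, hS, heq⟩
    refine statCC_aux f g h G H xb yb zb hy hz lam rho mu nu hlam0 hlam hmu0 hmu
      hnu0 hnu heq _ ?_
    intro l hyl hzl
    have hmunu : mu l = 0 ∧ nu l = 0 := by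
      by_cases hG : G l xb = 0
      · by_cases hH : H l xb = 0
        · exact hS l hG hH
        · constructor
          · apply hmu l
            rintro ⟨_, hHge⟩
            have hHpos : 0 < H l xb := lt_of_le_of_ne hHge (Ne.symm hH)
            have := (hz l).2.2 hHpos
            linarith
          · apply hnu l; rintro ⟨hH0, _⟩; exact hH hH0
      · constructor
        · apply hmu l; rintro ⟨hG0, _⟩; exact hG hG0
        · apply hnu l
          rintro ⟨_, hGge⟩
          have hGpos : 0 < G l xb := lt_of_le_of_ne hGge (Ne.symm hG)
          have := (hy l).2.2 hGpos
          linarith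
    rw [hmunu.1, hmunu.2]
    norm_num
end
end

section
/- For φ^t ∈ {φ_FB^t, φ_KS^t}, the family of relaxed feasible sets {X(φ^t)}_{t ≥ 0} has the following properties: (1) X(φ^0) = X; (2) if 0 ≤ s ≤ t then X(φ^s) ⊆ X(φ^t); (3) the intersection ∩_{t > 0} X(φ^t) equals X. -/
noncomputable section

open Filter Topology

variable {n m p q : ℕ}

lemma aux_sqrt_add_le' (x y : ℝ) (hx : 0 ≤ x) (hy : 0 ≤ y) :
    Real.sqrt (x + y) ≤ Real.sqrt x + Real.sqrt y := by
  have h1 : x + y ≤ (Real.sqrt x + Real.sqrt y) ^ 2 := by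
    have := Real.sq_sqrt hx
    have := Real.sq_sqrt hy
    have := Real.sqrt_nonneg x
    have := Real.sqrt_nonneg y
    nlinarith
  calc Real.sqrt (x + y) ≤ Real.sqrt ((Real.sqrt x + Real.sqrt y) ^ 2) :=
        Real.sqrt_le_sqrt h1
    _ = Real.sqrt x + Real.sqrt y := Real.sqrt_sq (by positivity)

lemma aux_fb0 (a b : ℝ) : a + b - Real.sqrt (a ^ 2 + b ^ 2) ≤ 0 ↔ a ≤ 0 ∨ b ≤ 0 := by
  constructor
  · intro hle
    by_contra hc
    push_neg at hc
    obtain ⟨ha, hb⟩ := hc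
    have h1 : Real.sqrt (a ^ 2 + b ^ 2) < a + b := by
      have h2 : a ^ 2 + b ^ 2 < (a + b) ^ 2 := by nlinarith
      calc Real.sqrt (a ^ 2 + b ^ 2) < Real.sqrt ((a + b) ^ 2) :=
            Real.sqrt_lt_sqrt (by positivity) h2
        _ = a + b := Real.sqrt_sq (by linarith)
    linarith
  · intro hab
    rcases hab with ha | hb
    · have : b ≤ Real.sqrt (a ^ 2 + b ^ 2) := by
        calc b ≤ |b| := le_abs_self b
          _ = Real.sqrt (b ^ 2) := (Real.sqrt_sq_eq_abs b).symm
          _ ≤ Real.sqrt (a ^ 2 + b ^ 2) := Real.sqrt_le_sqrt (by nlinarith)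
      linarith
    · have : a ≤ Real.sqrt (a ^ 2 + b ^ 2) := by
        calc a ≤ |a| := le_abs_self a
          _ = Real.sqrt (a ^ 2) := (Real.sqrt_sq_eq_abs a).symm
          _ ≤ Real.sqrt (a ^ 2 + b ^ 2) := Real.sqrt_le_sqrt (by nlinarith)
      linarith

lemma aux_ks0 (a b : ℝ) : phiKS (a, b) ≤ 0 ↔ a ≤ 0 ∨ b ≤ 0 := by
  unfold phiKS
  simp only
  split_ifs with hab
  · constructor
    · intro hle
      rcases mul_nonpos_iff.mp hle with ⟨_, h2⟩ | ⟨h1, _⟩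
      · exact Or.inr h2
      · exact Or.inl h1
    · rintro (ha | hb)
      · exact mul_nonpos_iff.mpr (Or.inr ⟨ha, by linarith⟩)
      · exact mul_nonpos_iff.mpr (Or.inl ⟨by linarith, hb⟩)
  · push_neg at hab
    constructor
    · intro _
      by_contra hc
      push_neg at hc
      nlinarith [hc.1, hc.2]
    · intro _
      nlinarith [sq_nonneg a, sq_nonneg b]

lemma aux_zero (phit : ℝ → ℝ × ℝ → ℝ) (hphit : phit = phiFBt ∨ phit = phiKSt)
    (a b : ℝ) : phit 0 (a, b) ≤ 0 ↔ a ≤ 0 ∨ b ≤ 0 := by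
  rcases hphit with rfl | rfl
  · unfold phiFBt
    simp only [mul_zero, add_zero]
    exact aux_fb0 a b
  · unfold phiKSt
    simp only [sub_zero]
    exact aux_ks0 a b

lemma aux_mono (phit : ℝ → ℝ × ℝ → ℝ) (hphit : phit = phiFBt ∨ phit = phiKSt)
    (s t : ℝ) (hst : s ≤ t) (a b : ℝ) : phit t (a, b) ≤ phit s (a, b) := by
  rcases hphit with rfl | rfl
  · unfold phiFBt
    simp only
    have : Real.sqrt (a ^ 2 + b ^ 2 + 2 * s) ≤ Real.sqrt (a ^ 2 + b ^ 2 + 2 * t) :=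
      Real.sqrt_le_sqrt (by linarith)
    linarith
  · unfold phiKSt
    linarith

lemma aux_limit (phit : ℝ → ℝ × ℝ → ℝ) (hphit : phit = phiFBt ∨ phit = phiKSt)
    (a b : ℝ) (hall : ∀ t : ℝ, 0 < t → phit t (a, b) ≤ 0) : phit 0 (a, b) ≤ 0 := by
  rcases hphit with rfl | rfl
  · unfold phiFBt at *
    simp only [mul_zero, add_zero] at *
    by_contra hc
    push_neg at hc
    set ε := a + b - Real.sqrt (a ^ 2 + b ^ 2) with hε
    have hεpos : 0 < ε := by linarith
    set δ := ε / 2 with hδ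
    have hδpos : 0 < δ := by positivity
    have ht : (0 : ℝ) < δ ^ 2 / 2 := by positivity
    have h1 := hall (δ ^ 2 / 2) ht
    have h2 : Real.sqrt (a ^ 2 + b ^ 2 + 2 * (δ ^ 2 / 2))
        ≤ Real.sqrt (a ^ 2 + b ^ 2) + δ := by
      have := aux_sqrt_add_le' (a ^ 2 + b ^ 2) (2 * (δ ^ 2 / 2)) (by positivity)
        (by positivity)
      have heq : Real.sqrt (2 * (δ ^ 2 / 2)) = δ := by
        rw [show 2 * (δ ^ 2 / 2) = δ ^ 2 by ring, Real.sqrt_sq hδpos.le]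
      linarith
    linarith
  · unfold phiKSt at *
    by_contra hc
    push_neg at hc
    simp only [sub_zero] at hc
    have := hall (phiKS (a, b) / 2) (by linarith)
    linarith

/-- Geometric properties of the family of relaxed feasible sets `X(φ^t)` for
`φ^t ∈ {φ_FB^t, φ_KS^t}`. -/
theorem relaxed_feasible_sets_properties {n m p q : ℕ} (f : (Fin n → ℝ) → ℝ)
    (g : Fin m → (Fin n → ℝ) → ℝ) (h : Fin p → (Fin n → ℝ) → ℝ)
    (G H : Fin q → (Fin n → ℝ) → ℝ)
    (hf : ContDiff ℝ 1 f) (hg : ∀ i, ContDiff ℝ 1 (g i)) (hh : ∀ j, ContDiff ℝ 1 (h j))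
    (hG : ∀ l, ContDiff ℝ 1 (G l)) (hH : ∀ l, ContDiff ℝ 1 (H l))
    (phit : ℝ → ℝ × ℝ → ℝ) (hphit : phit = phiFBt ∨ phit = phiKSt) :
    relFeas g h G H phit 0 = feasMPOC g h G H ∧
    (∀ s t : ℝ, 0 ≤ s → s ≤ t → relFeas g h G H phit s ⊆ relFeas g h G H phit t) ∧
    (⋂ t ∈ Set.Ioi (0 : ℝ), relFeas g h G H phit t) = feasMPOC g h G H := by
  have hzero : relFeas g h G H phit 0 = feasMPOC g h G H := by
    ext x
    simp only [relFeas, feasMPOC, Set.mem_setOf_eq]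
    constructor
    · rintro ⟨h1, h2, h3⟩
      exact ⟨h1, h2, fun l => (aux_zero phit hphit _ _).mp (h3 l)⟩
    · rintro ⟨h1, h2, h3⟩
      exact ⟨h1, h2, fun l => (aux_zero phit hphit _ _).mpr (h3 l)⟩
  have hmono : ∀ s t : ℝ, 0 ≤ s → s ≤ t →
      relFeas g h G H phit s ⊆ relFeas g h G H phit t := by
    intro s t _ hst x hx
    obtain ⟨h1, h2, h3⟩ := hx
    exact ⟨h1, h2, fun l => le_trans (aux_mono phit hphit s t hst _ _) (h3 l)⟩
  refine ⟨hzero, hmono, ?_⟩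
  ext x
  simp only [Set.mem_iInter, Set.mem_Ioi]
  constructor
  · intro hx
    rw [← hzero]
    obtain ⟨h1, h2, _⟩ := hx 1 (by norm_num)
    refine ⟨h1, h2, fun l => ?_⟩
    exact aux_limit phit hphit _ _ fun t ht => (hx t ht).2.2 l
  · intro hx t ht
    rw [← hzero] at hx
    exact hmono 0 t le_rfl ht.le hx
end
end
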